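/- arXiv:2009.01348 — 7 statements merged into one kernel-verified Lean document; each statement's English description precedes it below -/
import Mathlib

section
/- There is no isometry from any nonempty open subset of the unit 2-sphere (with its intrinsic/geodesic metric) onto a subset of the Euclidean plane. -/
open scoped RealInnerProductSpace
open Real Module

/-!
Fix `P ∈ U` and a small `ε > 0`. On the sphere take `A`, `C` at arc distance `ε` on either side
of `P` along a great circle, and `X` at arc distance `ε` from `P` along the perpendicular great
circle. In the plane `f A` and `f C` are `2ε` apart and both at distance `ε` from `f P`, so `f P`
is their midpoint, and Apollonius's theorem for `f X` forces `d(X, A) = √2 ε`. On the sphere,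
however, `cos d(X, A) = cos² ε` (spherical Pythagoras), which makes `d(X, A) < √2 ε` by the
strict concavity of `sin` on `[0, π]`.
-/

section InnerProductSpace

variable {E : Type*} [NormedAddCommGroup E] [InnerProductSpace ℝ E]

theorem exists_orthonormal_vecCons_of_finrank_eq_three (hE : finrank ℝ E = 3) {p : E}
    (hp : ‖p‖ = 1) : ∃ u v : E, Orthonormal ℝ ![p, u, v] := by
  have : FiniteDimensional ℝ E := .of_finrank_eq_succ hE
  have hp' : Orthonormal ℝ (Set.domRestrict {0} ![p, 0, 0]) := by
    refine ⟨fun ⟨i, hi⟩ => ?_, fun ⟨i, hi⟩ ⟨j, hj⟩ hij => ?_⟩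
    · obtain rfl := Set.mem_singleton_iff.1 hi
      exact hp
    · exact absurd (Subtype.ext (hi.trans hj.symm)) hij
  obtain ⟨b, hb⟩ :=
    hp'.exists_orthonormalBasis_extension_of_card_eq (hE.trans (Fintype.card_fin 3).symm)
  refine ⟨b 1, b 2, ?_⟩
  convert b.orthonormal using 1
  ext i : 1
  fin_cases i
  · exact (hb 0 rfl).symm
  all_goals rfl

theorem inner_cos_smul_add_sin_smul {p w w' : E} (hp : ‖p‖ = 1) (hw : ⟪p, w⟫ = 0)
    (hw' : ⟪p, w'⟫ = 0) (s t : ℝ) :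
    ⟪cos s • p + sin s • w, cos t • p + sin t • w'⟫ = cos s * cos t + sin s * sin t * ⟪w, w'⟫ := by
  simp only [inner_add_left, inner_add_right, real_inner_smul_left, real_inner_smul_right,
    real_inner_self_eq_norm_sq, hp, hw', real_inner_comm p w, hw]
  ring

theorem dist_le_arccos_inner {x y : E} (hx : ‖x‖ = 1) (hy : ‖y‖ = 1) :
    dist x y ≤ arccos ⟪x, y⟫ := by
  have hxy : |⟪x, y⟫| ≤ 1 := by simpa [hx, hy] using abs_real_inner_le_norm x y
  have hcos := one_sub_sq_div_two_le_cos (x := arccos ⟪x, y⟫)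
  rw [cos_arccos (abs_le.1 hxy).1 (abs_le.1 hxy).2] at hcos
  have hsq : dist x y ^ 2 ≤ arccos ⟪x, y⟫ ^ 2 := by
    rw [dist_eq_norm, norm_sub_sq_real, hx, hy]
    linarith
  exact (pow_le_pow_iff_left₀ dist_nonneg (arccos_nonneg _) two_ne_zero).1 hsq

/-- `A` and `C` lie at arc distance `t` on either side of `P` on one great circle, `X` at arc
distance `t` from `P` on the perpendicular great circle. -/
theorem exists_sphere_cross_of_finrank_eq_three (hE : finrank ℝ E = 3)
    (P : Metric.sphere (0 : E) 1) (t : ℝ) :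
    ∃ A C X : Metric.sphere (0 : E) 1,
      ⟪(A : E), P⟫ = cos t ∧ ⟪(C : E), P⟫ = cos t ∧ ⟪(X : E), P⟫ = cos t ∧
      ⟪(A : E), C⟫ = cos (2 * t) ∧ ⟪(X : E), A⟫ = cos t ^ 2 ∧ ⟪(X : E), C⟫ = cos t ^ 2 := by
  have hP := norm_eq_of_mem_sphere P
  obtain ⟨u, v, huv⟩ := exists_orthonormal_vecCons_of_finrank_eq_three hE hP
  have hu : ‖u‖ = 1 := huv.1 1
  have hv : ‖v‖ = 1 := huv.1 2
  have hPu : ⟪(P : E), u⟫ = 0 := huv.2 (by decide : (0 : Fin 3) ≠ 1)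
  have hPv : ⟪(P : E), v⟫ = 0 := huv.2 (by decide : (0 : Fin 3) ≠ 2)
  have hvu : ⟪v, u⟫ = 0 := huv.2 (by decide : (2 : Fin 3) ≠ 1)
  have huP : ⟪u, (P : E)⟫ = 0 := huv.2 (by decide : (1 : Fin 3) ≠ 0)
  have hvP : ⟪v, (P : E)⟫ = 0 := huv.2 (by decide : (2 : Fin 3) ≠ 0)
  have mem {w : E} (hw : ‖w‖ = 1) (hPw : ⟪(P : E), w⟫ = 0) (s : ℝ) :
      cos s • (P : E) + sin s • w ∈ Metric.sphere (0 : E) 1 := by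
    rw [mem_sphere_zero_iff_norm, norm_eq_sqrt_real_inner, inner_cos_smul_add_sin_smul hP hPw hPw,
      real_inner_self_eq_norm_sq, hw]
    simp [← sq, cos_sq_add_sin_sq]
  refine ⟨⟨_, mem hu hPu t⟩, ⟨_, mem hu hPu (-t)⟩, ⟨_, mem hv hPv t⟩, ?_⟩
  simp only [inner_cos_smul_add_sin_smul hP hPu hPu, inner_cos_smul_add_sin_smul hP hPv hPu]
  simp only [inner_add_left, real_inner_smul_left, real_inner_self_eq_norm_sq, hP, hu, hvu, huP,
    hvP, cos_neg, sin_neg, cos_two_mul']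
  refine ⟨?_, ?_, ?_, ?_, ?_, ?_⟩ <;> ring

end InnerProductSpace

theorem dist_sq_add_dist_sq_of_dist_eq_half {V P : Type*} [NormedAddCommGroup V]
    [InnerProductSpace ℝ V] [MetricSpace P] [NormedAddTorsor V P] {a c m : P}
    (ham : dist a m = dist a c / 2) (hmc : dist m c = dist a c / 2) (x : P) :
    dist x a ^ 2 + dist x c ^ 2 = 2 * (dist x m ^ 2 + (dist a c / 2) ^ 2) := by
  rw [eq_midpoint_of_dist_eq_half ham hmc]
  exact EuclideanGeometry.dist_sq_add_dist_sq_eq_two_mul_dist_midpoint_sq_add_half_dist_sq x a c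

theorem sin_mul_lt_mul_sin {k x : ℝ} (hk : 1 < k) (hx : 0 < x) (hkx : k * x ≤ π) :
    sin (k * x) < k * sin x := by
  have hk0 : 0 < k := by linarith
  have h := strictConcaveOn_sin_Icc.2 (show (0 : ℝ) ∈ Set.Icc 0 π from ⟨le_rfl, pi_pos.le⟩)
    (show k * x ∈ Set.Icc 0 π from ⟨by positivity, hkx⟩) (by positivity : (0 : ℝ) < k * x).ne
    (show 0 < 1 - 1 / k by rw [sub_pos, div_lt_one hk0]; exact hk)
    (show 0 < 1 / k by positivity) (by ring)
  simp only [smul_eq_mul, sin_zero, mul_zero, zero_add] at h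
  rw [show 1 / k * (k * x) = x by field_simp, one_div_mul_eq_div, div_lt_iff₀ hk0] at h
  linarith

theorem arccos_cos_sq_lt_sqrt_two_mul {ε : ℝ} (hε : 0 < ε) (hεπ : √2 * ε ≤ π) :
    arccos (cos ε ^ 2) < √2 * ε := by
  have hs : 1 < √2 := by rw [lt_sqrt zero_le_one]; norm_num
  have hs0 : (0 : ℝ) < √2 := by positivity
  set δ := ε / √2
  have hεδ : ε = √2 * δ := by rw [mul_div_cancel₀ _ hs0.ne']
  have hsin := sin_mul_lt_mul_sin (x := δ) hs (by positivity) (by rw [← hεδ]; nlinarith)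
  rw [← hεδ] at hsin
  have hcos : cos (√2 * ε) < cos ε ^ 2 := by
    have h2δ : √2 * ε = 2 * δ := by rw [hεδ, ← mul_assoc, mul_self_sqrt zero_le_two]
    rw [h2δ, cos_two_mul_eq_one_sub, cos_sq']
    nlinarith [sin_nonneg_of_nonneg_of_le_pi hε.le (by nlinarith), sq_sqrt zero_le_two]
  calc arccos (cos ε ^ 2) < arccos (cos (√2 * ε)) :=
        arccos_lt_arccos (neg_one_le_cos _) hcos (by simpa using cos_sq_le_one ε)
    _ = √2 * ε := arccos_cos (by positivity) hεπ

/-- There is no isometry from any nonempty open subset of the unit 2-sphere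
(with its intrinsic/geodesic metric `d_S(p,q) = arccos ⟪p,q⟫`) onto a subset of
the Euclidean plane. -/
theorem no_isometry_sphere_to_plane :
    ¬ ∃ (U : Set (Metric.sphere (0 : EuclideanSpace ℝ (Fin 3)) 1))
        (f : Metric.sphere (0 : EuclideanSpace ℝ (Fin 3)) 1 → EuclideanSpace ℝ (Fin 2)),
      IsOpen U ∧ U.Nonempty ∧
      ∀ p ∈ U, ∀ q ∈ U,
        dist (f p) (f q) = Real.arccos ⟪(p : EuclideanSpace ℝ (Fin 3)), (q : EuclideanSpace ℝ (Fin 3))⟫ := by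
  rintro ⟨U, f, hUopen, ⟨P, hP⟩, hf⟩
  obtain ⟨r, hr, hball⟩ := Metric.isOpen_iff.1 hUopen P hP
  obtain ⟨ε, hε, hεr, hε1⟩ : ∃ ε, 0 < ε ∧ ε < r ∧ ε ≤ 1 / 2 :=
    ⟨min r 1 / 2, by positivity, by linarith [min_le_left r 1], by linarith [min_le_right r 1]⟩
  have hεπ : ε ≤ π := by linarith [pi_gt_three]
  have hε2 : 2 * ε ≤ π := by linarith [pi_gt_three]
  have hεs : √2 * ε ≤ π := by nlinarith [(sqrt_le_iff.2 ⟨by norm_num, by norm_num⟩ : √2 ≤ 2)]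
  obtain ⟨A, C, X, hAP, hCP, hXP, hAC, hXA, hXC⟩ :=
    exists_sphere_cross_of_finrank_eq_three finrank_euclideanSpace_fin P ε
  have hU (Q : Metric.sphere (0 : EuclideanSpace ℝ (Fin 3)) 1)
      (hQ : ⟪(Q : EuclideanSpace ℝ (Fin 3)), P⟫ = cos ε) : Q ∈ U := hball <|
    calc dist Q P ≤ arccos ⟪(Q : EuclideanSpace ℝ (Fin 3)), P⟫ :=
          dist_le_arccos_inner (norm_eq_of_mem_sphere Q) (norm_eq_of_mem_sphere P)
      _ = ε := by rw [hQ, arccos_cos hε.le hεπ]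
      _ < r := hεr
  obtain ⟨hA, hC, hX⟩ : A ∈ U ∧ C ∈ U ∧ X ∈ U := ⟨hU A hAP, hU C hCP, hU X hXP⟩
  have hdist {Q R} (hQ : Q ∈ U) (hR : R ∈ U) {t : ℝ} (ht : 0 ≤ t) (htπ : t ≤ π)
      (hQR : ⟪(Q : EuclideanSpace ℝ (Fin 3)), R⟫ = cos t) : dist (f Q) (f R) = t := by
    rw [hf Q hQ R hR, hQR, arccos_cos ht htπ]
  have hAP' := hdist hA hP hε.le hεπ hAP
  have hPC' := hdist hP hC hε.le hεπ (by rw [real_inner_comm, hCP])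
  have hAC' := hdist hA hC (by positivity) hε2 hAC
  have hXP' := hdist hX hP hε.le hεπ hXP
  have hApollonius := dist_sq_add_dist_sq_of_dist_eq_half (a := f A) (c := f C) (m := f P)
    (by rw [hAP', hAC']; ring) (by rw [hPC', hAC']; ring) (f X)
  rw [hf X hX A hA, hf X hX C hC, hXA, hXC, hXP', hAC'] at hApollonius
  nlinarith [arccos_cos_sq_lt_sqrt_two_mul hε hεs, arccos_nonneg (cos ε ^ 2), sq_sqrt zero_le_two]
end

section
/- There is no map from a nonempty open subset of the unit 2-sphere to the Euclidean plane that multiplies all intrinsic distances by a fixed positive constant c. -/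
open scoped RealInnerProductSpace

/-- Key analytic inequality: curvature obstruction. -/
lemma key_cos_ineq {t : ℝ} (ht0 : 0 < t) (ht1 : t ≤ 1) :
    Real.cos (Real.sqrt 2 * t) < Real.cos t ^ 2 := by
  have hs2 : Real.sqrt 2 ^ 2 = 2 := Real.sq_sqrt (by norm_num)
  have hs1 : 1 < Real.sqrt 2 := by
    nlinarith [Real.sqrt_nonneg 2, Real.sq_sqrt (show (0:ℝ) ≤ 2 by norm_num)]
  have hspos : 0 < Real.sqrt 2 := by linarith
  have htpi : t ≤ Real.pi := le_trans ht1 (by linarith [Real.pi_gt_three])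
  -- strict concavity of sin on [0, π]
  have ha : (0:ℝ) < 1 - 1 / Real.sqrt 2 := by
    rw [sub_pos, div_lt_one hspos]; exact hs1
  have hb : (0:ℝ) < 1 / Real.sqrt 2 := by positivity
  have hmem0 : (0:ℝ) ∈ Set.Icc 0 Real.pi := ⟨le_refl 0, Real.pi_pos.le⟩
  have hmemt : t ∈ Set.Icc 0 Real.pi := ⟨ht0.le, htpi⟩
  have hconc := strictConcaveOn_sin_Icc.2 hmem0 hmemt (ne_of_lt ht0) ha hb (by ring)
  simp only [smul_eq_mul, mul_zero, zero_add, Real.sin_zero] at hconc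
  -- hconc : sin ((1/√2) * t) > (1 - 1/√2) * 0 + (1/√2) * sin t
  have hsin : Real.sin t / Real.sqrt 2 < Real.sin (t / Real.sqrt 2) := by
    have h2 : t / Real.sqrt 2 = 1 / Real.sqrt 2 * t := by ring
    have h3 : Real.sin t / Real.sqrt 2 = 1 / Real.sqrt 2 * Real.sin t := by ring
    rw [h2, h3]
    exact hconc
  have hsinnn : 0 ≤ Real.sin t := Real.sin_nonneg_of_nonneg_of_le_pi ht0.le htpi
  have hsq : (Real.sin t / Real.sqrt 2) ^ 2 < Real.sin (t / Real.sqrt 2) ^ 2 := by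
    apply pow_lt_pow_left₀ hsin (by positivity)
    norm_num
  have hdiv : (Real.sin t / Real.sqrt 2) ^ 2 = Real.sin t ^ 2 / 2 := by
    rw [div_pow, hs2]
  have hdouble : Real.sqrt 2 * t = 2 * (t / Real.sqrt 2) := by
    field_simp
    nlinarith [hs2]
  rw [hdouble, Real.cos_two_mul]
  have hc1 : Real.cos (t / Real.sqrt 2) ^ 2 = 1 - Real.sin (t / Real.sqrt 2) ^ 2 :=
    Real.cos_sq' _
  have hc2 : Real.cos t ^ 2 = 1 - Real.sin t ^ 2 := Real.cos_sq' _
  rw [hc1, hc2]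
  nlinarith [hsq, hdiv]

lemma inner_comb (x y w z : EuclideanSpace ℝ (Fin 3)) (a b a' b' : ℝ) :
    ⟪a • x + b • y, a' • w + b' • z⟫
      = a * a' * ⟪x, w⟫ + a * b' * ⟪x, z⟫ + b * a' * ⟪y, w⟫ + b * b' * ⟪y, z⟫ := by
  simp only [inner_add_left, inner_add_right, real_inner_smul_left, real_inner_smul_right]
  ring

/-- Median length formula in a Euclidean plane. -/
lemma median_formula (a b y : EuclideanSpace ℝ (Fin 2)) :
    dist y (midpoint ℝ a b) ^ 2
      = (dist y a ^ 2 + dist y b ^ 2) / 2 - dist a b ^ 2 / 4 := by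
  have hm : y - midpoint ℝ a b = ((1:ℝ)/2) • ((y - a) + (y - b)) := by
    rw [midpoint_eq_smul_add]
    simp only [invOf_eq_inv]
    rw [smul_add, smul_add]
    module
  have hpar := parallelogram_law_with_norm ℝ (y - a) (y - b)
  have hsub : (y - a) - (y - b) = b - a := by abel
  rw [hsub] at hpar
  have h1 : dist y (midpoint ℝ a b) = ‖y - midpoint ℝ a b‖ := dist_eq_norm _ _
  have h2 : dist y a = ‖y - a‖ := dist_eq_norm _ _
  have h3 : dist y b = ‖y - b‖ := dist_eq_norm _ _
  have h4 : dist a b = ‖b - a‖ := dist_eq_norm' _ _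
  rw [h1, h2, h3, h4, hm, norm_smul]
  rw [mul_pow]
  have : ‖(1:ℝ)/2‖ ^ 2 = (1:ℝ)/4 := by norm_num [Real.norm_eq_abs]
  rw [this]
  nlinarith [hpar]

set_option maxHeartbeats 3000000 in
/-- There is no map from a nonempty open subset of the unit 2-sphere to the
Euclidean plane multiplying all intrinsic distances by a fixed constant `c > 0`. -/
theorem no_scaled_isometry_sphere_to_plane :
    ¬ ∃ (c : ℝ) (U : Set (Metric.sphere (0 : EuclideanSpace ℝ (Fin 3)) 1))
        (f : Metric.sphere (0 : EuclideanSpace ℝ (Fin 3)) 1 → EuclideanSpace ℝ (Fin 2)),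
      0 < c ∧ IsOpen U ∧ U.Nonempty ∧
      ∀ p ∈ U, ∀ q ∈ U,
        dist (f p) (f q) = c * Real.arccos ⟪(p : EuclideanSpace ℝ (Fin 3)), (q : EuclideanSpace ℝ (Fin 3))⟫ := by
  rintro ⟨c, U, f, hc, hUopen, ⟨u0, hu0⟩, hf⟩
  rw [Metric.isOpen_iff] at hUopen
  obtain ⟨ε, hε, hball⟩ := hUopen u0 hu0
  set E3 := EuclideanSpace ℝ (Fin 3)
  set v : E3 := (u0 : E3) with hv_def
  have hvnorm : ‖v‖ = 1 := by
    have := u0.2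
    rwa [mem_sphere_iff_norm, sub_zero] at this
  have hvinner : ⟪v, v⟫ = 1 := by
    rw [real_inner_self_eq_norm_sq, hvnorm]; norm_num
  have hvne : v ≠ 0 := by
    intro h; rw [h, norm_zero] at hvnorm; norm_num at hvnorm
  haveI : Fact (Module.finrank ℝ E3 = 2 + 1) := ⟨finrank_euclideanSpace_fin⟩
  set b : OrthonormalBasis (Fin 2) ℝ ((ℝ ∙ v)ᗮ) :=
    OrthonormalBasis.fromOrthogonalSpanSingleton 2 hvne with hb_def
  set e1 : E3 := ((b 0 : (ℝ ∙ v)ᗮ) : E3) with he1_def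
  set e2 : E3 := ((b 1 : (ℝ ∙ v)ᗮ) : E3) with he2_def
  have horth : ∀ e : ((ℝ ∙ v)ᗮ), ⟪v, (e : E3)⟫ = 0 := fun e =>
    (Submodule.mem_orthogonal (ℝ ∙ v) (e : E3)).1 e.2 v
      (Submodule.mem_span_singleton_self v)
  have hve1 : ⟪v, e1⟫ = 0 := horth _
  have hve2 : ⟪v, e2⟫ = 0 := horth _
  have he1v : ⟪e1, v⟫ = 0 := by rw [real_inner_comm]; exact hve1
  have he2v : ⟪e2, v⟫ = 0 := by rw [real_inner_comm]; exact hve2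
  have hbij : ∀ i j : Fin 2, ⟪((b i : (ℝ ∙ v)ᗮ) : E3), ((b j : (ℝ ∙ v)ᗮ) : E3)⟫
      = if i = j then 1 else 0 := by
    intro i j
    have := b.orthonormal
    rw [orthonormal_iff_ite] at this
    exact this i j
  have he11 : ⟪e1, e1⟫ = 1 := by simpa using hbij 0 0
  have he22 : ⟪e2, e2⟫ = 1 := by simpa using hbij 1 1
  have he12 : ⟪e1, e2⟫ = 0 := by simpa using hbij 0 1
  have he21 : ⟪e2, e1⟫ = 0 := by simpa using hbij 1 0
  -- choose the scale t
  set t : ℝ := min (ε / 4) 1 with ht_def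
  have ht0 : 0 < t := lt_min (by linarith) one_pos
  have ht1 : t ≤ 1 := min_le_right _ _
  have htε : t ≤ ε / 4 := min_le_left _ _
  have htpi : t ≤ Real.pi := ht1.trans (by linarith [Real.pi_gt_three])
  have h2tpi : 2 * t ≤ Real.pi := by linarith [Real.pi_gt_three]
  set ct : ℝ := Real.cos t with hct_def
  set st : ℝ := Real.sin t with hst_def
  have hpyth : ct ^ 2 + st ^ 2 = 1 := by
    rw [hct_def, hst_def, add_comm]; exact Real.sin_sq_add_cos_sq t
  -- the four points as ambient vectors
  set pp : E3 := ct • v + st • e1 with hpp_def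
  set qq : E3 := ct • v + (-st) • e1 with hqq_def
  set rr : E3 := ct • v + st • e2 with hrr_def
  have hvv : v = (1:ℝ) • v + (0:ℝ) • e1 := by simp
  -- inner products
  have hppv : ⟪pp, v⟫ = ct := by
    rw [hpp_def]; nth_rewrite 2 [hvv]
    rw [inner_comb]; rw [hvinner, hve1, he1v, he11]; ring
  have hqqv : ⟪qq, v⟫ = ct := by
    rw [hqq_def]; nth_rewrite 2 [hvv]
    rw [inner_comb]; rw [hvinner, hve1, he1v, he11]; ring
  have hrrv : ⟪rr, v⟫ = ct := by
    rw [hrr_def]; nth_rewrite 2 [hvv]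
    rw [inner_comb]; rw [hvinner, hve1, he2v, he21]; ring
  have hvpp : ⟪v, pp⟫ = ct := by rw [real_inner_comm]; exact hppv
  have hppqq : ⟪pp, qq⟫ = ct ^ 2 - st ^ 2 := by
    rw [hpp_def, hqq_def, inner_comb, hvinner, hve1, he1v, he11]; ring
  have hrrpp : ⟪rr, pp⟫ = ct ^ 2 := by
    rw [hrr_def, hpp_def, inner_comb, hvinner, hve1, he2v, he21]; ring
  have hrrqq : ⟪rr, qq⟫ = ct ^ 2 := by
    rw [hrr_def, hqq_def, inner_comb, hvinner, hve1, he2v, he21]; ring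
  -- norms
  have hnorm1 : ∀ (e : E3), ⟪v, e⟫ = 0 → ⟪e, v⟫ = 0 → ⟪e, e⟫ = 1 →
      ∀ s' : ℝ, ct ^ 2 + s' ^ 2 = 1 → ‖ct • v + s' • e‖ = 1 := by
    intro e h1 h2 h3 s' hps
    have hns : ‖ct • v + s' • e‖ ^ 2 = 1 := by
      rw [← real_inner_self_eq_norm_sq, inner_comb, hvinner, h1, h2, h3]
      linear_combination hps
    calc ‖ct • v + s' • e‖ = Real.sqrt (‖ct • v + s' • e‖ ^ 2) :=
          (Real.sqrt_sq (norm_nonneg _)).symm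
      _ = 1 := by rw [hns, Real.sqrt_one]
  have hnegsq : ct ^ 2 + (-st) ^ 2 = 1 := by rw [neg_pow]; simpa using hpyth
  have hppmem : pp ∈ Metric.sphere (0 : E3) 1 := by
    rw [mem_sphere_iff_norm, sub_zero]; exact hnorm1 e1 hve1 he1v he11 st hpyth
  have hqqmem : qq ∈ Metric.sphere (0 : E3) 1 := by
    rw [mem_sphere_iff_norm, sub_zero]; exact hnorm1 e1 hve1 he1v he11 (-st) hnegsq
  have hrrmem : rr ∈ Metric.sphere (0 : E3) 1 := by
    rw [mem_sphere_iff_norm, sub_zero]; exact hnorm1 e2 hve2 he2v he22 st hpyth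
  set P : Metric.sphere (0 : E3) 1 := ⟨pp, hppmem⟩ with hP_def
  set Q : Metric.sphere (0 : E3) 1 := ⟨qq, hqqmem⟩ with hQ_def
  set R : Metric.sphere (0 : E3) 1 := ⟨rr, hrrmem⟩ with hR_def
  -- membership in the ball, hence in U
  have hdistball : ∀ (w : E3) (hw : w ∈ Metric.sphere (0 : E3) 1), ⟪w, v⟫ = ct →
      (⟨w, hw⟩ : Metric.sphere (0 : E3) 1) ∈ U := by
    intro w hw hwv
    apply hball
    rw [Metric.mem_ball, Subtype.dist_eq]
    have hwnorm : ‖w‖ = 1 := by rwa [mem_sphere_iff_norm, sub_zero] at hw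
    have hvw : ⟪v, w⟫ = ct := by rw [real_inner_comm]; exact hwv
    have hsq : dist w v ^ 2 = 2 - 2 * ct := by
      rw [dist_eq_norm, ← real_inner_self_eq_norm_sq]
      rw [inner_sub_left, inner_sub_right, inner_sub_right]
      rw [hvw, hwv, hvinner, real_inner_self_eq_norm_sq, hwnorm]
      ring
    have ht2le : t ^ 2 ≤ 1 := by nlinarith only [ht0, ht1]
    have hcoslb : 1 - t ^ 2 ≤ ct := by
      have hb := Real.cos_bound (show |t| ≤ 1 by rwa [abs_of_pos ht0])
      rw [abs_of_pos ht0] at hb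
      have hb' := abs_le.1 hb
      rw [hct_def]
      nlinarith only [hb'.1, mul_nonneg (sq_nonneg t) (sub_nonneg.2 ht2le), ht0, ht1]
    have hdle : dist w v ≤ 2 * t := by
      have h1 : dist w v ^ 2 ≤ (2 * t) ^ 2 := by
        nlinarith only [hsq, hcoslb, ht2le, ht0, sq_nonneg t]
      nlinarith only [h1, dist_nonneg (x := w) (y := v), ht0,
        sq_nonneg (dist w v - 2 * t)]
    calc dist w v ≤ 2 * t := hdle
      _ ≤ 2 * (ε / 4) := by linarith
      _ < ε := by linarith
  have hPU : P ∈ U := hdistball pp hppmem hppv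
  have hQU : Q ∈ U := hdistball qq hqqmem hqqv
  have hRU : R ∈ U := hdistball rr hrrmem hrrv
  have hMU : u0 ∈ U := hu0
  -- arccos values
  have harc_t : Real.arccos ct = t := by rw [hct_def]; exact Real.arccos_cos ht0.le htpi
  have harc_2t : Real.arccos (ct ^ 2 - st ^ 2) = 2 * t := by
    have : ct ^ 2 - st ^ 2 = Real.cos (2 * t) := by
      rw [Real.cos_two_mul, hct_def, hst_def]
      linear_combination (-1 : ℝ) * Real.sin_sq_add_cos_sq t
    rw [this]
    exact Real.arccos_cos (by linarith) h2tpi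
  set D : ℝ := Real.arccos (ct ^ 2) with hD_def
  have hcoeP : ((P : Metric.sphere (0:E3) 1) : E3) = pp := rfl
  have hcoeQ : ((Q : Metric.sphere (0:E3) 1) : E3) = qq := rfl
  have hcoeR : ((R : Metric.sphere (0:E3) 1) : E3) = rr := rfl
  have hcoeM : ((u0 : Metric.sphere (0:E3) 1) : E3) = v := rfl
  -- distances in the plane
  have hfPM : dist (f P) (f u0) = c * t := by
    rw [hf P hPU u0 hMU, hcoeP, hcoeM, hppv, harc_t]
  have hfMQ : dist (f u0) (f Q) = c * t := by
    have hvqq : ⟪v, qq⟫ = ct := by rw [real_inner_comm]; exact hqqv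
    rw [hf u0 hMU Q hQU, hcoeQ, hcoeM, hvqq, harc_t]
  have hfPQ : dist (f P) (f Q) = c * (2 * t) := by
    rw [hf P hPU Q hQU, hcoeP, hcoeQ, hppqq, harc_2t]
  have hfRP : dist (f R) (f P) = c * D := by
    rw [hf R hRU P hPU, hcoeR, hcoeP, hrrpp]
  have hfRQ : dist (f R) (f Q) = c * D := by
    rw [hf R hRU Q hQU, hcoeR, hcoeQ, hrrqq]
  have hfRM : dist (f R) (f u0) = c * t := by
    rw [hf R hRU u0 hMU, hcoeR, hcoeM, hrrv, harc_t]
  -- f u0 is the midpoint of f P and f Q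
  have hmid : f u0 = midpoint ℝ (f P) (f Q) := by
    apply eq_midpoint_of_dist_eq_half
    · rw [hfPM, hfPQ]; ring
    · rw [hfMQ, hfPQ]; ring
  -- median formula
  have hmed := median_formula (f P) (f Q) (f R)
  rw [← hmid] at hmed
  rw [hfRM, hfRP, hfRQ, hfPQ] at hmed
  -- derive D² = 2 t²
  have hc2 : (0:ℝ) < c ^ 2 := by positivity
  have hD2' : c ^ 2 * D ^ 2 = c ^ 2 * (2 * t ^ 2) := by linear_combination -hmed
  have hD2 : D ^ 2 = 2 * t ^ 2 := mul_left_cancel₀ (ne_of_gt hc2) hD2'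
  have hDnn : 0 ≤ D := Real.arccos_nonneg _
  have hDeq : D = Real.sqrt 2 * t := by
    have h1 : D = Real.sqrt (D ^ 2) := (Real.sqrt_sq hDnn).symm
    rw [h1, hD2, show (2:ℝ) * t ^ 2 = 2 * t ^ 2 from rfl, Real.sqrt_mul (by norm_num),
      Real.sqrt_sq ht0.le]
  have hcosD : Real.cos D = ct ^ 2 := by
    rw [hD_def]
    apply Real.cos_arccos
    · nlinarith only [sq_nonneg ct]
    · nlinarith only [hpyth, sq_nonneg st]
  rw [hDeq] at hcosD
  have := key_cos_ineq ht0 ht1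
  rw [← hct_def] at this
  rw [hcosD] at this
  exact lt_irrefl _ this
end

section
/- The sum of the angles of any spherical triangle on the unit sphere is strictly greater than π. -/
/-!
Pass to the polar triangle `u = B × C`, `v = C × A`, `w = A × B`. By Lagrange's identity the
tangent projections at a unit vertex `A` have the same Gram matrix as the cross products with `A`,
so the angle at `A` is the angle between `A × B` and `A × C = -v`, i.e. `π - ∠(v, w)`.
The angle sum is therefore `3π` minus the perimeter of the polar triangle, and `u, v, w` are
again independent (`⟪A, u⟫ = ⟪B, v⟫ = ⟪C, w⟫ = det (A, B, C) ≠ 0`, while the other pairings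
vanish), so that perimeter is `< 2π`: the strict triangle inequality through `-v`
gives `∠(w, u) < ∠(w, -v) + ∠(-v, u) = 2π - ∠(v, w) - ∠(u, v)`.
-/

open scoped RealInnerProductSpace

/-- The angle of the spherical triangle `ABC` at the vertex `A`: the angle between
the projections of `B` and `C` to the tangent plane of the sphere at `A`
(equivalently, the angle between the tangent vectors at `A` of the minimizing
great-circle arcs from `A` to `B` and from `A` to `C`). -/
noncomputable def sphericalAngle (A B C : EuclideanSpace ℝ (Fin 3)) : ℝ :=
  InnerProductGeometry.angle (B - ⟪A, B⟫ • A) (C - ⟪A, C⟫ • A)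

open InnerProductGeometry Real Matrix WithLp
open scoped NNReal

namespace InnerProductGeometry

variable {V : Type*} [NormedAddCommGroup V] [InnerProductSpace ℝ V]

theorem angle_lt_angle_add_angle_of_linearIndependent {x y z : V}
    (h : LinearIndependent ℝ ![x, y, z]) : angle x z < angle x y + angle y z := by
  refine (angle_le_angle_add_angle x y z).lt_of_ne fun heq => ?_
  rcases (angle_eq_angle_add_angle_iff (h.ne_zero 1)).mp heq with hπ | hspan
  · obtain ⟨-, r, -, rfl⟩ := angle_eq_pi_iff.mp hπ
    refine h.notMem_span_image (s := {0}) (x := 2) (by decide) ?_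
    simpa using Submodule.smul_mem _ r (Submodule.mem_span_singleton_self x)
  · refine h.notMem_span_image (s := {0, 2}) (x := 1) (by decide) ?_
    simpa [Set.image_insert_eq] using Submodule.span_subset_span ℝ≥0 ℝ _ hspan

theorem angle_add_angle_add_angle_lt_two_pi {x y z : V} (h : LinearIndependent ℝ ![x, y, z]) :
    angle x y + angle y z + angle z x < 2 * π := by
  have h' : LinearIndependent ℝ ![x, -y, z] := by
    convert h.units_smul ![1, -1, 1] using 1
    ext i : 1
    fin_cases i <;> simp
  have := angle_lt_angle_add_angle_of_linearIndependent h'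
  rw [angle_neg_right, angle_neg_left, angle_comm x z] at this
  linarith

theorem angle_eq_angle_of_inner_eq {x y x' y' : V} (hxy : ⟪x, y⟫ = ⟪x', y'⟫)
    (hx : ⟪x, x⟫ = ⟪x', x'⟫) (hy : ⟪y, y⟫ = ⟪y', y'⟫) : angle x y = angle x' y' := by
  simp only [angle, norm_eq_sqrt_real_inner (F := V), hxy, hx, hy]

end InnerProductGeometry

theorem linearIndependent_of_pairwise_inner_eq_zero {V ι : Type*} [NormedAddCommGroup V]
    [InnerProductSpace ℝ V] {u a : ι → V} (h0 : Pairwise fun i j => ⟪a i, u j⟫ = 0)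
    (h1 : ∀ i, ⟪a i, u i⟫ ≠ 0) : LinearIndependent ℝ u :=
  .of_pairwise_dual_eq_zero_one u (fun i => (⟪a i, u i⟫)⁻¹ • innerₛₗ ℝ (a i))
    (fun i j hij => by simp [h0 hij]) (fun i => by simp [h1 i])

noncomputable def cross (x y : EuclideanSpace ℝ (Fin 3)) : EuclideanSpace ℝ (Fin 3) :=
  toLp 2 (ofLp x ⨯₃ ofLp y)

section Cross

variable (x y z w : EuclideanSpace ℝ (Fin 3))

theorem real_inner_eq_dotProduct : ⟪x, y⟫ = ofLp x ⬝ᵥ ofLp y :=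
  dotProduct_comm _ _

theorem cross_swap : cross y x = -cross x y := by
  rw [cross, cross, ← cross_anticomm, toLp_neg]

theorem inner_self_cross : ⟪x, cross x y⟫ = 0 := by
  simp [cross, real_inner_eq_dotProduct]

theorem inner_cross_self : ⟪y, cross x y⟫ = 0 := by
  simp [cross, real_inner_eq_dotProduct]

theorem inner_cross_cyclic : ⟪x, cross y z⟫ = ⟪y, cross z x⟫ := by
  simp only [cross, real_inner_eq_dotProduct]
  exact triple_product_permutation _ _ _

theorem inner_cross_cross : ⟪cross x y, cross z w⟫ = ⟪x, z⟫ * ⟪y, w⟫ - ⟪x, w⟫ * ⟪y, z⟫ := by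
  simp only [cross, real_inner_eq_dotProduct, cross_dot_cross]

variable {x y z}

theorem inner_cross_ne_zero_of_linearIndependent (h : LinearIndependent ℝ ![x, y, z]) :
    ⟪x, cross y z⟫ ≠ 0 := by
  have hrows := h.map' (WithLp.linearEquiv 2 ℝ (Fin 3 → ℝ)).toLinearMap (LinearEquiv.ker _)
  rw [show ⇑(WithLp.linearEquiv 2 ℝ (Fin 3 → ℝ)).toLinearMap ∘ ![x, y, z] =
      ![ofLp x, ofLp y, ofLp z] by ext i : 1; fin_cases i <;> rfl] at hrows
  rw [real_inner_eq_dotProduct, cross, ofLp_toLp, triple_product_eq_det]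
  exact ((isUnit_iff_isUnit_det _).mp
    (linearIndependent_rows_iff_isUnit (A := of _).mp hrows)).ne_zero

theorem linearIndependent_cross (h : LinearIndependent ℝ ![x, y, z]) :
    LinearIndependent ℝ ![cross y z, cross z x, cross x y] := by
  have hdet := inner_cross_ne_zero_of_linearIndependent h
  refine linearIndependent_of_pairwise_inner_eq_zero (a := ![x, y, z]) ?_ ?_
  · intro i j hij
    fin_cases i <;> fin_cases j <;> simp_all [inner_self_cross, inner_cross_self]
  · intro i
    fin_cases i <;> simp [hdet, ← inner_cross_cyclic]

end Cross

theorem sphericalAngle_eq_angle_cross {A : EuclideanSpace ℝ (Fin 3)} (hA : ‖A‖ = 1)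
    (B C : EuclideanSpace ℝ (Fin 3)) :
    sphericalAngle A B C = angle (cross A B) (cross A C) := by
  have hAA : ⟪A, A⟫ = 1 := inner_self_eq_one_of_norm_eq_one hA
  have lagrange (X Y : EuclideanSpace ℝ (Fin 3)) :
      ⟪X - ⟪A, X⟫ • A, Y - ⟪A, Y⟫ • A⟫ = ⟪cross A X, cross A Y⟫ := by
    simp only [inner_cross_cross, inner_sub_left, inner_sub_right, real_inner_smul_left,
      real_inner_smul_right, hAA, real_inner_comm A]
    ring
  exact angle_eq_angle_of_inner_eq (lagrange B C) (lagrange B B) (lagrange C C)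

theorem sphericalAngle_eq_pi_sub_angle_cross {A : EuclideanSpace ℝ (Fin 3)} (hA : ‖A‖ = 1)
    (B C : EuclideanSpace ℝ (Fin 3)) :
    sphericalAngle A B C = π - angle (cross C A) (cross A B) := by
  rw [sphericalAngle_eq_angle_cross hA, angle_comm, cross_swap C A, angle_neg_left]

/-- The sum of the angles of any spherical triangle on the unit sphere (vertices
linearly independent, so no two are antipodal and they do not lie on a common
great circle) is strictly greater than `π`. -/
theorem spherical_triangle_angle_sum_gt_pi
    (A B C : EuclideanSpace ℝ (Fin 3))
    (hA : ‖A‖ = 1) (hB : ‖B‖ = 1) (hC : ‖C‖ = 1)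
    (hindep : LinearIndependent ℝ ![A, B, C]) :
    Real.pi < sphericalAngle A B C + sphericalAngle B C A + sphericalAngle C A B := by
  have hpolar := angle_add_angle_add_angle_lt_two_pi (linearIndependent_cross hindep)
  rw [sphericalAngle_eq_pi_sub_angle_cross hA, sphericalAngle_eq_pi_sub_angle_cross hB,
    sphericalAngle_eq_pi_sub_angle_cross hC]
  linarith
end

section
/- If f : U → ℝ² is a smooth map on an open subset U of the sphere (parametrized by longitude t and latitude u) such that f preserves the length element along every meridian and along every parallel, and sends meridians and parallels to curves meeting at right angles, then f cannot exist on any open set; i.e., the corresponding system of PDEs |∂f/∂u| = 1, |∂f/∂t| = cos u, ⟨∂f/∂t, ∂f/∂u⟩ = 0 has no smooth solution f on any open set. -/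
open scoped RealInnerProductSpace


local notation "E2" => EuclideanSpace ℝ (Fin 2)

lemma euclid_inner_two (y z : E2) : ⟪y, z⟫ = y 0 * z 0 + y 1 * z 1 := by
  simp [PiLp.inner_apply, Fin.sum_univ_two, mul_comm]

lemma euclid_key {a b x : E2} (hab : ⟪a, b⟫ = 0)
    (ha : a ≠ 0) (hb : b ≠ 0) (h1 : ⟪x, a⟫ = 0) (h2 : ⟪x, b⟫ = 0) : x = 0 := by
  rw [euclid_inner_two] at hab h1 h2
  have hA : a 0 ^ 2 + a 1 ^ 2 ≠ 0 := by
    intro h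
    apply ha
    have h0 : a 0 = 0 := by nlinarith [sq_nonneg (a 0), sq_nonneg (a 1)]
    have h1' : a 1 = 0 := by nlinarith [sq_nonneg (a 0), sq_nonneg (a 1)]
    refine PiLp.ext ?_; intro i; fin_cases i <;> simp [h0, h1']
  have hd : a 0 * b 1 - a 1 * b 0 ≠ 0 := by
    intro h
    apply hb
    have h0 : b 0 = 0 := by
      have : (a 0 ^ 2 + a 1 ^ 2) * b 0 = 0 := by linear_combination a 0 * hab - a 1 * h
      exact (mul_eq_zero.1 this).resolve_left hA
    have h1' : b 1 = 0 := by
      have : (a 0 ^ 2 + a 1 ^ 2) * b 1 = 0 := by linear_combination a 1 * hab + a 0 * h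
      exact (mul_eq_zero.1 this).resolve_left hA
    refine PiLp.ext ?_; intro i; fin_cases i <;> simp [h0, h1']
  have hx0 : x 0 = 0 := by
    have : (a 0 * b 1 - a 1 * b 0) * x 0 = 0 := by linear_combination b 1 * h1 - a 1 * h2
    exact (mul_eq_zero.1 this).resolve_left hd
  have hx1 : x 1 = 0 := by
    have : (a 0 * b 1 - a 1 * b 0) * x 1 = 0 := by linear_combination a 0 * h2 - b 0 * h1
    exact (mul_eq_zero.1 this).resolve_left hd
  refine PiLp.ext ?_; intro i; fin_cases i <;> simp [hx0, hx1]

variable {F : Type*} [NormedAddCommGroup F] [NormedSpace ℝ F]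

lemma aux_hasFDerivAt_fderiv_apply {f : ℝ × ℝ → F} {U : Set (ℝ × ℝ)} (hU : IsOpen U)
    (hf : ContDiffOn ℝ (⊤ : ℕ∞) f U) {p : ℝ × ℝ} (hp : p ∈ U) (v : ℝ × ℝ) :
    HasFDerivAt (fun q => fderiv ℝ f q v)
      ((ContinuousLinearMap.apply ℝ F v).comp (fderiv ℝ (fderiv ℝ f) p)) p := by
  have hC : ContDiffAt ℝ (⊤ : ℕ∞) f p := hf.contDiffAt (hU.mem_nhds hp)
  have hdF : DifferentiableAt ℝ (fderiv ℝ f) p :=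
    (hC.fderiv_right (m := 1) (by exact WithTop.coe_le_coe.2 le_top)).differentiableAt one_ne_zero
  exact ((ContinuousLinearMap.apply ℝ F v).hasFDerivAt).comp p hdF.hasFDerivAt

lemma aux_symm {f : ℝ × ℝ → F} {U : Set (ℝ × ℝ)} (hU : IsOpen U)
    (hf : ContDiffOn ℝ (⊤ : ℕ∞) f U) {p : ℝ × ℝ} (hp : p ∈ U) (v w : ℝ × ℝ) :
    fderiv ℝ (fderiv ℝ f) p v w = fderiv ℝ (fderiv ℝ f) p w v :=
  (hf.contDiffAt (hU.mem_nhds hp)).isSymmSndFDerivAt (by rw [minSmoothness_of_isRCLikeNormedField]; exact WithTop.coe_le_coe.2 (le_top : (2:ℕ∞) ≤ ⊤)) v w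

lemma aux_deriv_inner {f : ℝ × ℝ → E2} {U : Set (ℝ × ℝ)} (hU : IsOpen U)
    (hf : ContDiffOn ℝ (⊤ : ℕ∞) f U) {p : ℝ × ℝ} (hp : p ∈ U) (v v' w : ℝ × ℝ)
    {g : ℝ × ℝ → ℝ} {g' : ℝ × ℝ →L[ℝ] ℝ} (hg : HasFDerivAt g g' p)
    (heq : ∀ q ∈ U, ⟪fderiv ℝ f q v, fderiv ℝ f q v'⟫ = g q) :
    ⟪fderiv ℝ f p v, fderiv ℝ (fderiv ℝ f) p w v'⟫
      + ⟪fderiv ℝ (fderiv ℝ f) p w v, fderiv ℝ f p v'⟫ = g' w := by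
  have hdv := (aux_hasFDerivAt_fderiv_apply hU hf hp v)
  have hdv' := (aux_hasFDerivAt_fderiv_apply hU hf hp v')
  have hev : (fun q => ⟪fderiv ℝ f q v, fderiv ℝ f q v'⟫) =ᶠ[nhds p] g := by
    filter_upwards [hU.mem_nhds hp] with q hq using heq q hq
  have h1 : fderiv ℝ (fun q => ⟪fderiv ℝ f q v, fderiv ℝ f q v'⟫) p = g' := by
    rw [hev.fderiv_eq, hg.fderiv]
  have h2 := fderiv_inner_apply ℝ hdv.differentiableAt hdv'.differentiableAt w
  rw [h1, hdv.fderiv, hdv'.fderiv] at h2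
  exact h2.symm

/-- The pointwise consequences of the PDE system at a point where `cos p.2 ≠ 0`. -/
lemma aux_pointwise {f : ℝ × ℝ → E2} {U : Set (ℝ × ℝ)} (hU : IsOpen U)
    (hf : ContDiffOn ℝ (⊤ : ℕ∞) f U)
    (hmer : ∀ p ∈ U, ‖fderiv ℝ f p (0, 1)‖ = 1)
    (hpar : ∀ p ∈ U, ‖fderiv ℝ f p (1, 0)‖ = Real.cos p.2)
    (horth : ∀ p ∈ U, ⟪fderiv ℝ f p (1, 0), fderiv ℝ f p (0, 1)⟫ = 0)
    {p : ℝ × ℝ} (hp : p ∈ U) (hcos : Real.cos p.2 ≠ 0) :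
    fderiv ℝ (fderiv ℝ f) p (0, 1) (0, 1) = 0 ∧
    Real.cos p.2 • fderiv ℝ (fderiv ℝ f) p (0, 1) (1, 0)
      + Real.sin p.2 • fderiv ℝ f p (1, 0) = 0 := by
  set A := fderiv ℝ f p (1, 0) with hA
  set B := fderiv ℝ f p (0, 1) with hB
  set H := fderiv ℝ (fderiv ℝ f) p with hH
  -- basic data
  have hAB : ⟪A, B⟫ = 0 := horth p hp
  have hAne : A ≠ 0 := fun h => hcos (by rw [← hpar p hp, ← hA, h, norm_zero])
  have hBne : B ≠ 0 := fun h => by simpa [← hB, h] using hmer p hp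
  -- derivative of ⟪b,b⟫ = 1
  have hS1 : ∀ w : ℝ × ℝ, ⟪H w (0, 1), B⟫ = 0 := by
    intro w
    have := aux_deriv_inner hU hf hp (0, 1) (0, 1) w (hasFDerivAt_const (1 : ℝ) p)
      (fun q hq => by rw [real_inner_self_eq_norm_sq, hmer q hq, one_pow])
    simp only [ContinuousLinearMap.zero_apply] at this
    rw [real_inner_comm] at this
    linarith [this]
  -- derivative of ⟪a,b⟫ = 0
  have hS2 : ∀ w : ℝ × ℝ, ⟪A, H w (0, 1)⟫ + ⟪H w (1, 0), B⟫ = 0 := by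
    intro w
    have := aux_deriv_inner hU hf hp (1, 0) (0, 1) w (hasFDerivAt_const (0 : ℝ) p)
      (fun q hq => horth q hq)
    simpa using this
  -- derivative of ⟪a,a⟫ = cos² u
  have hS3 : ∀ w : ℝ × ℝ, ⟪H w (1, 0), A⟫ = -(Real.cos p.2 * Real.sin p.2) * w.2 := by
    intro w
    have hcos2 : HasFDerivAt (fun q : ℝ × ℝ => Real.cos q.2 ^ 2)
        ((2 * Real.cos p.2 ^ 1 * -Real.sin p.2) • ContinuousLinearMap.snd ℝ ℝ ℝ) p :=
      ((Real.hasDerivAt_cos p.2).pow 2).comp_hasFDerivAt p hasFDerivAt_snd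
    have := aux_deriv_inner hU hf hp (1, 0) (1, 0) w hcos2
      (fun q hq => by rw [real_inner_self_eq_norm_sq, hpar q hq])
    simp only [ContinuousLinearMap.smul_apply, ContinuousLinearMap.coe_snd',
      smul_eq_mul, pow_one] at this
    rw [real_inner_comm] at this
    nlinarith [this]
  -- symmetry
  have hsym : ∀ v w : ℝ × ℝ, H v w = H w v := fun v w => aux_symm hU hf hp v w
  -- first conclusion: b_u = 0
  have hbu : H (0, 1) (0, 1) = 0 := by
    apply euclid_key hAB hAne hBne
    · rw [real_inner_comm]
      have h2 := hS2 (0, 1)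
      have h1 : ⟪H (0, 1) (1, 0), B⟫ = 0 := by rw [hsym (0, 1) (1, 0)]; exact hS1 (1, 0)
      linarith
    · exact hS1 (0, 1)
  refine ⟨hbu, ?_⟩
  -- second conclusion
  apply euclid_key hAB hAne hBne
  · rw [inner_add_left, real_inner_smul_left, real_inner_smul_left]
    have h3 := hS3 (0, 1)
    rw [show ((0:ℝ), (1:ℝ)).2 = 1 from rfl, mul_one] at h3
    rw [hsym (0, 1) (1, 0)] at h3
    have haa : ⟪A, A⟫ = Real.cos p.2 ^ 2 := by
      rw [real_inner_self_eq_norm_sq, hpar p hp]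
    rw [hsym (0, 1) (1, 0)]
    linear_combination Real.cos p.2 * h3 + Real.sin p.2 * haa
  · rw [inner_add_left, real_inner_smul_left, real_inner_smul_left]
    have h1 : ⟪H (0, 1) (1, 0), B⟫ = 0 := by rw [hsym (0, 1) (1, 0)]; exact hS1 (1, 0)
    rw [h1, hAB]; ring

/-- Euler's theorem on the nonexistence of a "perfect map". Parametrize the unit
sphere by longitude `t` and latitude `u`, so the round metric is
`du² + cos²u dt²`. A perfect map `f(t,u)` into the Euclidean plane would
preserve the length element along every meridian (`‖∂f/∂u‖ = 1`) and along every
parallel (`‖∂f/∂t‖ = cos u`), and would send meridians and parallels to curves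
meeting at right angles (`⟪∂f/∂t, ∂f/∂u⟫ = 0`), i.e. the pullback of the
Euclidean metric would be `du² + cos²u dt²`. No smooth map on a nonempty open
set satisfies this system of PDEs. -/
theorem no_perfect_map :
    ¬ ∃ (U : Set (ℝ × ℝ)) (f : ℝ × ℝ → EuclideanSpace ℝ (Fin 2)),
      IsOpen U ∧ U.Nonempty ∧ ContDiffOn ℝ (⊤ : ℕ∞) f U ∧
      (∀ p ∈ U, ‖fderiv ℝ f p (0, 1)‖ = 1) ∧
      (∀ p ∈ U, ‖fderiv ℝ f p (1, 0)‖ = Real.cos p.2) ∧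
      (∀ p ∈ U, ⟪fderiv ℝ f p (1, 0), fderiv ℝ f p (0, 1)⟫ = 0) := by
  rintro ⟨U, f, hU, ⟨p₀, hp₀⟩, hf, hmer, hpar, horth⟩
  -- cos is nonnegative on U
  have hcosU : ∀ q ∈ U, 0 ≤ Real.cos q.2 := fun q hq => (hpar q hq) ▸ norm_nonneg _
  -- cos is positive at the base point
  have hcospos : 0 < Real.cos p₀.2 := by
    rcases (hcosU p₀ hp₀).lt_or_eq with h | h
    · exact h
    · exfalso
      have hev : ∀ᶠ u in nhds p₀.2, (p₀.1, u) ∈ U := by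
        have hc : ContinuousAt (fun u : ℝ => ((p₀.1, u) : ℝ × ℝ)) p₀.2 :=
          (continuous_const.prodMk continuous_id).continuousAt
        exact hc.preimage_mem_nhds (hU.mem_nhds hp₀)
      have hmin : IsLocalMin Real.cos p₀.2 := by
        filter_upwards [hev] with u hu
        rw [← h]
        exact hcosU (p₀.1, u) hu
      have hd := hmin.deriv_eq_zero
      rw [Real.deriv_cos] at hd
      have hs : Real.sin p₀.2 = 0 := neg_eq_zero.1 hd
      have h1 := Real.sin_sq_add_cos_sq p₀.2
      rw [hs, ← h] at h1
      norm_num at h1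
  -- a ball around p₀ inside U where cos is positive
  obtain ⟨ε, hε, hball⟩ := Metric.isOpen_iff.1 (hU.inter (isOpen_lt continuous_const
      (Real.continuous_cos.comp continuous_snd))) p₀ ⟨hp₀, hcospos⟩
  set V := Metric.ball p₀ ε with hV
  have hVU : ∀ q ∈ V, q ∈ U := fun q hq => (hball hq).1
  have hVc : ∀ q ∈ V, 0 < Real.cos q.2 := fun q hq => (hball hq).2
  have hmemV : ∀ t u : ℝ, dist t p₀.1 < ε → dist u p₀.2 < ε → (t, u) ∈ V := by
    intro t u h1 h2
    rw [hV, Metric.mem_ball, Prod.dist_eq]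
    exact max_lt h1 h2
  have hpt := fun q (hq : q ∈ V) =>
    aux_pointwise hU hf hmer hpar horth (hVU q hq) (hVc q hq).ne'
  -- the u-column of the differential is constant in the u-direction
  have hBconst : ∀ q ∈ V, fderiv ℝ f q (0, 1) = fderiv ℝ f (q.1, p₀.2) (0, 1) := by
    rintro ⟨t, u⟩ hq
    rw [hV, Metric.mem_ball, Prod.dist_eq, max_lt_iff] at hq
    have hmem : ∀ v ∈ Metric.ball p₀.2 ε, ((t, v) : ℝ × ℝ) ∈ V := fun v hv =>
      hmemV t v hq.1 (Metric.mem_ball.1 hv)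
    have hder : ∀ v ∈ Metric.ball p₀.2 ε,
        HasFDerivAt (fun v' : ℝ => fderiv ℝ f (t, v') (0, 1))
          (0 : ℝ →L[ℝ] EuclideanSpace ℝ (Fin 2)) v := by
      intro v hv
      have hj : HasFDerivAt (fun v' : ℝ => ((t, v') : ℝ × ℝ))
          ((0 : ℝ →L[ℝ] ℝ).prod (ContinuousLinearMap.id ℝ ℝ)) v :=
        (hasFDerivAt_const t v).prodMk (hasFDerivAt_id v)
      have hB := (aux_hasFDerivAt_fderiv_apply hU hf (hVU _ (hmem v hv))
        ((0 : ℝ), (1 : ℝ))).comp v hj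
      have h0 : (((ContinuousLinearMap.apply ℝ (EuclideanSpace ℝ (Fin 2))
            ((0 : ℝ), (1 : ℝ))).comp (fderiv ℝ (fderiv ℝ f) (t, v))).comp
            ((0 : ℝ →L[ℝ] ℝ).prod (ContinuousLinearMap.id ℝ ℝ))) = 0 := by
        refine ContinuousLinearMap.ext_ring ?_
        simp only [ContinuousLinearMap.comp_apply, ContinuousLinearMap.prod_apply,
          ContinuousLinearMap.zero_apply, ContinuousLinearMap.id_apply,
          ContinuousLinearMap.apply_apply]
        exact (hpt (t, v) (hmem v hv)).1
      rw [h0] at hB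
      exact hB
    have hconst := Convex.is_const_of_fderivWithin_eq_zero (𝕜 := ℝ) (convex_ball p₀.2 ε)
      (fun v hv => ((hder v hv).differentiableAt).differentiableWithinAt)
      (fun v hv => by rw [fderivWithin_of_isOpen Metric.isOpen_ball hv, (hder v hv).fderiv])
      (Metric.mem_ball.2 hq.2) (Metric.mem_ball_self hε)
    exact hconst
  -- hence the t-derivative of that column is constant in u as well
  have hBt : ∀ q ∈ V, fderiv ℝ (fun r => fderiv ℝ f r (0, 1)) q ((1 : ℝ), (0 : ℝ))
      = fderiv ℝ (fun r => fderiv ℝ f r (0, 1)) (q.1, p₀.2) (1, 0) := by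
    intro q hq
    have hq1 : ((q.1, p₀.2) : ℝ × ℝ) ∈ V := by
      rw [hV, Metric.mem_ball, Prod.dist_eq, max_lt_iff] at hq ⊢
      exact ⟨hq.1, by simpa using hε⟩
    have hk : HasFDerivAt (fun r : ℝ × ℝ => ((r.1, p₀.2) : ℝ × ℝ))
        ((ContinuousLinearMap.fst ℝ ℝ ℝ).prod 0) q :=
      hasFDerivAt_fst.prodMk (hasFDerivAt_const p₀.2 q)
    have hBk := (aux_hasFDerivAt_fderiv_apply hU hf (hVU _ hq1)
      ((0 : ℝ), (1 : ℝ))).comp q hk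
    have heq : (fun r => fderiv ℝ f r (0, 1))
        =ᶠ[nhds q] (fun r : ℝ × ℝ => fderiv ℝ f (r.1, p₀.2) (0, 1)) := by
      filter_upwards [Metric.isOpen_ball.mem_nhds hq] with r hr using hBconst r hr
    have hBk' : HasFDerivAt (fun r : ℝ × ℝ => fderiv ℝ f (r.1, p₀.2) (0, 1))
        ((((ContinuousLinearMap.apply ℝ (EuclideanSpace ℝ (Fin 2))) ((0 : ℝ), (1 : ℝ))).comp
          (fderiv ℝ (fderiv ℝ f) (q.1, p₀.2))).comp
          ((ContinuousLinearMap.fst ℝ ℝ ℝ).prod 0)) q := hBk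
    rw [heq.fderiv_eq, hBk'.fderiv,
      (aux_hasFDerivAt_fderiv_apply hU hf (hVU _ hq1) ((0 : ℝ), (1 : ℝ))).fderiv]
    rfl
  -- the squared norm of that t-derivative is sin² u
  have hnorm : ∀ q ∈ V, ⟪fderiv ℝ (fun r => fderiv ℝ f r (0, 1)) q ((1 : ℝ), (0 : ℝ)),
      fderiv ℝ (fun r => fderiv ℝ f r (0, 1)) q ((1 : ℝ), (0 : ℝ))⟫ = Real.sin q.2 ^ 2 := by
    intro q hq
    have h2 := (hpt q hq).2
    rw [aux_symm hU hf (hVU q hq) (0, 1) (1, 0)] at h2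
    have hfd : fderiv ℝ (fun r => fderiv ℝ f r (0, 1)) q ((1 : ℝ), (0 : ℝ))
        = fderiv ℝ (fderiv ℝ f) q (1, 0) (0, 1) := by
      rw [(aux_hasFDerivAt_fderiv_apply hU hf (hVU q hq) ((0 : ℝ), (1 : ℝ))).fderiv]
      rfl
    rw [hfd]
    set h := fderiv ℝ (fderiv ℝ f) q (1, 0) (0, 1) with hh
    set A := fderiv ℝ f q (1, 0) with hA
    have heq2 : Real.cos q.2 • h = (-Real.sin q.2) • A := by
      rw [neg_smul]
      exact eq_neg_of_add_eq_zero_left h2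
    have hsq : Real.cos q.2 ^ 2 * ⟪h, h⟫ = Real.sin q.2 ^ 2 * ⟪A, A⟫ := by
      calc Real.cos q.2 ^ 2 * ⟪h, h⟫
          = ⟪Real.cos q.2 • h, Real.cos q.2 • h⟫ := by
            rw [real_inner_smul_left, real_inner_smul_right]; ring
        _ = ⟪(-Real.sin q.2) • A, (-Real.sin q.2) • A⟫ := by rw [heq2]
        _ = Real.sin q.2 ^ 2 * ⟪A, A⟫ := by
            rw [real_inner_smul_left, real_inner_smul_right]; ring
    have haa : ⟪A, A⟫ = Real.cos q.2 ^ 2 := by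
      rw [hA, real_inner_self_eq_norm_sq, hpar q (hVU q hq)]
    have hc := (hVc q hq).ne'
    apply mul_left_cancel₀ (pow_ne_zero 2 hc)
    rw [hsq, haa]; ring
  -- sin² is constant on a vertical interval
  have hsinconst : ∀ u ∈ Metric.ball p₀.2 ε, Real.sin u ^ 2 = Real.sin p₀.2 ^ 2 := by
    intro u hu
    have hq : ((p₀.1, u) : ℝ × ℝ) ∈ V := hmemV p₀.1 u (by simpa using hε) (Metric.mem_ball.1 hu)
    have hq0 : ((p₀.1, p₀.2) : ℝ × ℝ) ∈ V := by
      have : ((p₀.1, p₀.2) : ℝ × ℝ) = p₀ := rfl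
      rw [this]; exact Metric.mem_ball_self hε
    have h1 := hnorm (p₀.1, u) hq
    have h2 := hBt (p₀.1, u) hq
    have h3 := hnorm (p₀.1, p₀.2) hq0
    simp only [] at h1 h2 h3
    rw [← h1, h2]
    exact h3
  -- hence sin·cos = 0 on that interval
  have hsc : ∀ u ∈ Metric.ball p₀.2 ε, Real.sin u * Real.cos u = 0 := by
    intro u hu
    have hev : (fun v => Real.sin v ^ 2) =ᶠ[nhds u] (fun _ => Real.sin p₀.2 ^ 2) := by
      filter_upwards [Metric.isOpen_ball.mem_nhds hu] with v hv using hsinconst v hv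
    have h1 : deriv (fun v => Real.sin v ^ 2) u = 0 := by
      rw [hev.deriv_eq]; exact deriv_const u _
    have h2 : HasDerivAt (fun v => Real.sin v ^ 2) (2 * Real.sin u ^ 1 * Real.cos u) u :=
      (Real.hasDerivAt_sin u).pow 2
    rw [h2.deriv] at h1
    nlinarith [h1]
  -- hence sin = 0 on that interval
  have hs0 : ∀ u ∈ Metric.ball p₀.2 ε, Real.sin u = 0 := by
    intro u hu
    have hq : ((p₀.1, u) : ℝ × ℝ) ∈ V := hmemV p₀.1 u (by simp [hε]) (Metric.mem_ball.1 hu)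
    have hcu : 0 < Real.cos u := hVc (p₀.1, u) hq
    rcases mul_eq_zero.1 (hsc u hu) with h | h
    · exact h
    · exact absurd h hcu.ne'
  -- contradiction: the derivative of sin at p₀.2 is then 0, i.e., cos p₀.2 = 0
  have hev : Real.sin =ᶠ[nhds p₀.2] (fun _ => 0) := by
    filter_upwards [Metric.isOpen_ball.mem_nhds (Metric.mem_ball_self hε)] with v hv using hs0 v hv
  have hds : deriv Real.sin p₀.2 = 0 := by
    rw [hev.deriv_eq]; exact deriv_const _ _
  rw [Real.deriv_sin] at hds
  exact hcospos.ne' hds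
end

section
/- There is no smooth map f from a nonempty open subset of the unit sphere to ℝ² whose differential at every point is a linear isometry from the tangent plane of the sphere to ℝ². -/
open scoped RealInnerProductSpace
open Real

noncomputable def sph : ℝ × ℝ → EuclideanSpace ℝ (Fin 3) :=
  fun w => WithLp.toLp 2 ![cos w.1 * cos w.2, cos w.1 * sin w.2, sin w.1]

noncomputable def Dsph (w : ℝ × ℝ) : (ℝ × ℝ) →L[ℝ] EuclideanSpace ℝ (Fin 3) :=
  (EuclideanSpace.equiv (Fin 3) ℝ).symm.toContinuousLinearMap.comp <|
    ContinuousLinearMap.pi ![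
      (-(sin w.1 * cos w.2)) • ContinuousLinearMap.fst ℝ ℝ ℝ
        + (-(cos w.1 * sin w.2)) • ContinuousLinearMap.snd ℝ ℝ ℝ,
      (-(sin w.1 * sin w.2)) • ContinuousLinearMap.fst ℝ ℝ ℝ
        + (cos w.1 * cos w.2) • ContinuousLinearMap.snd ℝ ℝ ℝ,
      (cos w.1) • ContinuousLinearMap.fst ℝ ℝ ℝ]

lemma Dsph_apply (w ξ : ℝ × ℝ) (i : Fin 3) :
    Dsph w ξ i = ![-(sin w.1 * cos w.2) * ξ.1 + -(cos w.1 * sin w.2) * ξ.2,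
      -(sin w.1 * sin w.2) * ξ.1 + cos w.1 * cos w.2 * ξ.2,
      cos w.1 * ξ.1] i := by
  fin_cases i <;> simp [Dsph, ContinuousLinearMap.pi_apply]

lemma sph_apply (w : ℝ × ℝ) (i : Fin 3) :
    sph w i = ![cos w.1 * cos w.2, cos w.1 * sin w.2, sin w.1] i := rfl

lemma contDiff_sph : ContDiff ℝ (⊤ : ℕ∞) sph := by
  rw [contDiff_euclidean]
  intro i
  fin_cases i <;> simp only [sph_apply] <;> simp
  · exact (contDiff_fst.cos.mul contDiff_snd.cos)
  · exact (contDiff_fst.cos.mul contDiff_snd.sin)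
  · exact contDiff_fst.sin

lemma hasFDerivAt_sph (w : ℝ × ℝ) : HasFDerivAt sph (Dsph w) w := by
  rw [← hasFDerivWithinAt_univ, hasFDerivWithinAt_euclidean]
  intro i
  rw [hasFDerivWithinAt_univ]
  have hc1 : HasFDerivAt (fun p : ℝ × ℝ => cos p.1)
      ((-sin w.1) • ContinuousLinearMap.fst ℝ ℝ ℝ) w :=
    (Real.hasDerivAt_cos w.1).comp_hasFDerivAt w (hasFDerivAt_fst)
  have hs1 : HasFDerivAt (fun p : ℝ × ℝ => sin p.1)
      ((cos w.1) • ContinuousLinearMap.fst ℝ ℝ ℝ) w :=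
    (Real.hasDerivAt_sin w.1).comp_hasFDerivAt w (hasFDerivAt_fst)
  have hc2 : HasFDerivAt (fun p : ℝ × ℝ => cos p.2)
      ((-sin w.2) • ContinuousLinearMap.snd ℝ ℝ ℝ) w :=
    (Real.hasDerivAt_cos w.2).comp_hasFDerivAt w (hasFDerivAt_snd)
  have hs2 : HasFDerivAt (fun p : ℝ × ℝ => sin p.2)
      ((cos w.2) • ContinuousLinearMap.snd ℝ ℝ ℝ) w :=
    (Real.hasDerivAt_sin w.2).comp_hasFDerivAt w (hasFDerivAt_snd)
  fin_cases i
  · have := hc1.mul hc2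
    exact this.congr_fderiv (ContinuousLinearMap.ext fun ξ => by simp [Dsph_apply] <;> ring)
  · have := hc1.mul hs2
    exact this.congr_fderiv (ContinuousLinearMap.ext fun ξ => by simp [Dsph_apply] <;> ring)
  · exact hs1.congr_fderiv (ContinuousLinearMap.ext fun ξ => by simp [Dsph_apply])


lemma sph_mem_sphere (w : ℝ × ℝ) : sph w ∈ Metric.sphere (0 : EuclideanSpace ℝ (Fin 3)) 1 := by
  rw [mem_sphere_iff_norm, sub_zero, ← Real.sqrt_one, EuclideanSpace.norm_eq]
  congr 1
  simp [Fin.sum_univ_three, sph_apply]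
  nlinarith [sin_sq_add_cos_sq w.1, sin_sq_add_cos_sq w.2]

lemma inner_sph_Dsph (w ξ : ℝ × ℝ) : ⟪sph w, Dsph w ξ⟫ = 0 := by
  rw [PiLp.inner_apply]
  simp only [Fin.sum_univ_three, Dsph_apply, sph_apply, RCLike.inner_apply, conj_trivial]
  simp
  linear_combination (-(cos w.1 * sin w.1 * ξ.1)) * sin_sq_add_cos_sq w.2

lemma inner_Dsph_Dsph (w ξ η : ℝ × ℝ) :
    ⟪Dsph w ξ, Dsph w η⟫ = ξ.1 * η.1 + cos w.1 ^ 2 * (ξ.2 * η.2) := by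
  rw [PiLp.inner_apply]
  simp only [Fin.sum_univ_three, Dsph_apply, RCLike.inner_apply, conj_trivial]
  simp
  linear_combination (ξ.1 * η.1) * sin_sq_add_cos_sq w.1
    + (sin w.1 ^ 2 * ξ.1 * η.1 + cos w.1 ^ 2 * ξ.2 * η.2) * sin_sq_add_cos_sq w.2

lemma orth_scalar {a0 a1 b0 b1 z0 z1 : ℝ} (hab : a0*b0 + a1*b1 = 0)
    (ha : a0^2 + a1^2 ≠ 0) (hb : b0^2 + b1^2 ≠ 0)
    (hza : z0*a0 + z1*a1 = 0) (hzb : z0*b0 + z1*b1 = 0) : z0 = 0 ∧ z1 = 0 := by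
  have hdet : (a0*b1 - a1*b0)^2 = (a0^2+a1^2) * (b0^2+b1^2) := by
    linear_combination (-(a0*b0 + a1*b1)) * hab
  have hd : a0*b1 - a1*b0 ≠ 0 := by
    intro h
    rw [h] at hdet
    exact (mul_ne_zero ha hb) (by linarith)
  constructor
  · have h0 : (a0*b1 - a1*b0) * z0 = 0 := by linear_combination b1*hza - a1*hzb
    exact (mul_eq_zero.1 h0).resolve_left hd
  · have h1 : (a0*b1 - a1*b0) * z1 = 0 := by linear_combination a0*hzb - b0*hza
    exact (mul_eq_zero.1 h1).resolve_left hd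

lemma orth2 {a b z : EuclideanSpace ℝ (Fin 2)} (hab : ⟪a,b⟫ = 0)
    (ha : ⟪a,a⟫ ≠ 0) (hb : ⟪b,b⟫ ≠ 0) (hza : ⟪z,a⟫ = 0) (hzb : ⟪z,b⟫ = 0) : z = 0 := by
  simp only [PiLp.inner_apply, RCLike.inner_apply, conj_trivial, Fin.sum_univ_two] at *
  have ha' : a 0 ^2 + a 1 ^2 ≠ 0 := by intro h; apply ha; nlinarith
  have hb' : b 0 ^2 + b 1 ^2 ≠ 0 := by intro h; apply hb; nlinarith
  obtain ⟨h0, h1⟩ := orth_scalar (a0 := a 0) (a1 := a 1) (b0 := b 0) (b1 := b 1)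
    (z0 := z 0) (z1 := z 1) (by linarith) ha' hb' (by linarith) (by linarith)
  ext i
  fin_cases i <;> simpa using ‹_›

lemma fderiv_eval {F : ℝ × ℝ → (ℝ × ℝ) →L[ℝ] EuclideanSpace ℝ (Fin 2)} {w : ℝ × ℝ}
    (h : DifferentiableAt ℝ F w) (v ξ : ℝ × ℝ) :
    fderiv ℝ (fun y => F y v) w ξ = fderiv ℝ F w ξ v := by
  rw [fderiv_clm_apply h (differentiableAt_const v)]
  simp

theorem aux_core (U : Set (EuclideanSpace ℝ (Fin 3))) (f : EuclideanSpace ℝ (Fin 3) → EuclideanSpace ℝ (Fin 2))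
    (hU : IsOpen U) (he : sph (0,0) ∈ U) (hfU : ContDiffOn ℝ (⊤ : ℕ∞) f U)
    (hiso : ∀ p ∈ U ∩ Metric.sphere 0 1, ∀ v : EuclideanSpace ℝ (Fin 3),
        ⟪p, v⟫ = 0 → ‖fderiv ℝ f p v‖ = ‖v‖) : False := by
  classical
  set e1 : ℝ × ℝ := (1, 0) with he1
  set e2 : ℝ × ℝ := (0, 1) with he2
  set W : Set (ℝ × ℝ) := sph ⁻¹' U ∩ {w | cos w.1 ≠ 0} with hWdef
  have hW : IsOpen W := by
    apply IsOpen.inter (hU.preimage contDiff_sph.continuous)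
    exact isOpen_ne_fun (Real.continuous_cos.comp continuous_fst) continuous_const
  have hw0 : ((0,0) : ℝ × ℝ) ∈ W := by
    constructor
    · exact he
    · simp
  set g : ℝ × ℝ → EuclideanSpace ℝ (Fin 2) := f ∘ sph with hgdef
  have hg : ∀ w ∈ W, ContDiffAt ℝ (⊤ : ℕ∞) g w := fun w hw =>
    (hfU.contDiffAt (hU.mem_nhds hw.1)).comp w contDiff_sph.contDiffAt
  -- first fundamental form identity
  have hkey : ∀ w ∈ W, ∀ ξ η : ℝ × ℝ,
      ⟪fderiv ℝ g w ξ, fderiv ℝ g w η⟫ = ξ.1 * η.1 + cos w.1 ^ 2 * (ξ.2 * η.2) := by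
    intro w hw ξ η
    have hdf : DifferentiableAt ℝ f (sph w) :=
      ((hfU.contDiffAt (hU.mem_nhds hw.1)).differentiableAt (by simp))
    have hcomp : fderiv ℝ g w = (fderiv ℝ f (sph w)).comp (Dsph w) :=
      (hdf.hasFDerivAt.comp w (hasFDerivAt_sph w)).fderiv
    have hn : ∀ ζ : ℝ × ℝ, ‖fderiv ℝ g w ζ‖ = ‖Dsph w ζ‖ := by
      intro ζ
      rw [hcomp]
      exact hiso (sph w) ⟨hw.1, sph_mem_sphere w⟩ _ (inner_sph_Dsph w ζ)
    have hadd : fderiv ℝ g w (ξ + η) = fderiv ℝ g w ξ + fderiv ℝ g w η := map_add _ _ _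
    have haddD : Dsph w (ξ + η) = Dsph w ξ + Dsph w η := map_add _ _ _
    rw [real_inner_eq_norm_add_mul_self_sub_norm_mul_self_sub_norm_mul_self_div_two,
      ← hadd, hn, hn, hn, haddD,
      ← real_inner_eq_norm_add_mul_self_sub_norm_mul_self_sub_norm_mul_self_div_two,
      inner_Dsph_Dsph]
  set X : ℝ × ℝ → EuclideanSpace ℝ (Fin 2) := fun w => fderiv ℝ g w e1 with hXdef
  set Y : ℝ × ℝ → EuclideanSpace ℝ (Fin 2) := fun w => fderiv ℝ g w e2 with hYdef
  have hXsm : ∀ w ∈ W, ContDiffAt ℝ (⊤ : ℕ∞) X w := fun w hw =>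
    ((hg w hw).fderiv_right (by simp)).clm_apply contDiffAt_const
  have hYsm : ∀ w ∈ W, ContDiffAt ℝ (⊤ : ℕ∞) Y w := fun w hw =>
    ((hg w hw).fderiv_right (by simp)).clm_apply contDiffAt_const
  have hXX : ∀ w ∈ W, ⟪X w, X w⟫ = 1 := by
    intro w hw; have := hkey w hw e1 e1; simpa [he1] using this
  have hXY : ∀ w ∈ W, ⟪X w, Y w⟫ = 0 := by
    intro w hw; have := hkey w hw e1 e2; simpa [he1, he2] using this
  have hYY : ∀ w ∈ W, ⟪Y w, Y w⟫ = cos w.1 ^ 2 := by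
    intro w hw; have := hkey w hw e2 e2; simpa [he2] using this
  have hdX : ∀ w ∈ W, DifferentiableAt ℝ X w := fun w hw =>
    (hXsm w hw).differentiableAt (by simp)
  have hdY : ∀ w ∈ W, DifferentiableAt ℝ Y w := fun w hw =>
    (hYsm w hw).differentiableAt (by simp)
  have hdF : ∀ w ∈ W, DifferentiableAt ℝ (fderiv ℝ g) w := fun w hw =>
    ((hg w hw).fderiv_right (m := (⊤ : ℕ∞)) (by simp)).differentiableAt (by simp)
  -- Clairaut for g : ∂₁ Y = ∂₂ X
  have hsymg : ∀ w ∈ W, fderiv ℝ Y w e1 = fderiv ℝ X w e2 := by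
    intro w hw
    have hs : IsSymmSndFDerivAt ℝ g w := (hg w hw).isSymmSndFDerivAt (by simp; exact WithTop.coe_le_coe.mpr le_top)
    rw [hYdef, hXdef]
    rw [fderiv_eval (hdF w hw), fderiv_eval (hdF w hw)]
    exact hs e1 e2
  -- derivative of ⟪X, X⟫ = 1
  have hXXd : ∀ w ∈ W, ∀ ξ : ℝ × ℝ, ⟪X w, fderiv ℝ X w ξ⟫ = 0 := by
    intro w hw ξ
    have hev : (fun y => ⟪X y, X y⟫) =ᶠ[nhds w] fun _ => (1:ℝ) :=
      Filter.eventuallyEq_of_mem (hW.mem_nhds hw) (fun y hy => hXX y hy)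
    have h0 : fderiv ℝ (fun y => ⟪X y, X y⟫) w = 0 := by
      rw [hev.fderiv_eq]; exact fderiv_const_apply 1
    have h1 := fderiv_inner_apply ℝ (hdX w hw) (hdX w hw) ξ
    rw [h0, ContinuousLinearMap.zero_apply] at h1
    linarith [h1, real_inner_comm (X w) ((fderiv ℝ X w) ξ)]
  -- derivative of ⟪X, Y⟫ = 0 in direction e1
  have hXv_orth_Y : ∀ w ∈ W, ⟪fderiv ℝ X w e1, Y w⟫ = 0 := by
    intro w hw
    have hev : (fun y => ⟪X y, Y y⟫) =ᶠ[nhds w] fun _ => (0:ℝ) :=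
      Filter.eventuallyEq_of_mem (hW.mem_nhds hw) (fun y hy => hXY y hy)
    have h0 : fderiv ℝ (fun y => ⟪X y, Y y⟫) w = 0 := by
      rw [hev.fderiv_eq]; exact fderiv_const_apply 0
    have h1 := fderiv_inner_apply ℝ (hdX w hw) (hdY w hw) e1
    rw [h0, ContinuousLinearMap.zero_apply] at h1
    rw [hsymg w hw, hXXd w hw e2] at h1
    linarith [h1]
  -- derivative of ⟪Y, Y⟫ = cos² in direction e1
  have hYYd : ∀ w ∈ W, ⟪fderiv ℝ X w e2, Y w⟫ = -(sin w.1 * cos w.1) := by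
    intro w hw
    have hev : (fun y => ⟪Y y, Y y⟫) =ᶠ[nhds w] fun y => cos y.1 ^ 2 :=
      Filter.eventuallyEq_of_mem (hW.mem_nhds hw) (fun y hy => hYY y hy)
    have hrhs : HasFDerivAt (fun y : ℝ × ℝ => cos y.1 ^ 2)
        ((2 * cos w.1 * (-sin w.1)) • ContinuousLinearMap.fst ℝ ℝ ℝ) w := by
      have h1 : HasFDerivAt (fun p : ℝ × ℝ => cos p.1)
          ((-sin w.1) • ContinuousLinearMap.fst ℝ ℝ ℝ) w :=
        (Real.hasDerivAt_cos w.1).comp_hasFDerivAt w (hasFDerivAt_fst)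
      have := h1.mul h1
      have hfun : (fun y : ℝ × ℝ => cos y.1 ^ 2) = (fun p => cos p.1) * (fun p => cos p.1) := by
        funext y; rw [pow_two]; rfl
      rw [hfun]
      refine this.congr_fderiv ?_
      · refine ContinuousLinearMap.ext fun ξ => ?_
        simp only [ContinuousLinearMap.smul_apply, ContinuousLinearMap.add_apply, smul_eq_mul]
        ring
    have h0 : fderiv ℝ (fun y => ⟪Y y, Y y⟫) w = (2 * cos w.1 * (-sin w.1)) • ContinuousLinearMap.fst ℝ ℝ ℝ := by
      rw [hev.fderiv_eq]; exact hrhs.fderiv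
    have h1 := fderiv_inner_apply ℝ (hdY w hw) (hdY w hw) e1
    rw [h0] at h1
    rw [hsymg w hw] at h1
    rw [real_inner_comm (fderiv ℝ X w e2) (Y w)] at h1
    simp only [he1, ContinuousLinearMap.smul_apply, ContinuousLinearMap.coe_fst',
      smul_eq_mul] at h1
    rw [real_inner_comm]
    rw [real_inner_comm] at h1
    linarith [h1]
  -- vanishing of ∂₁ X on W
  have hA : ∀ w ∈ W, fderiv ℝ X w e1 = 0 := by
    intro w hw
    refine orth2 (hXY w hw) (by rw [hXX w hw]; norm_num) (a := X w) (b := Y w)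
      (by rw [hYY w hw]; exact pow_ne_zero 2 hw.2) ?_ (hXv_orth_Y w hw)
    rw [real_inner_comm]; exact hXXd w hw e1
  -- cos u • ∂₂ X + sin u • Y = 0 on W
  have hB : ∀ w ∈ W, cos w.1 • fderiv ℝ X w e2 + sin w.1 • Y w = 0 := by
    intro w hw
    refine orth2 (hXY w hw) (by rw [hXX w hw]; norm_num) (a := X w) (b := Y w)
      (by rw [hYY w hw]; exact pow_ne_zero 2 hw.2) ?_ ?_
    · rw [inner_add_left, real_inner_smul_left, real_inner_smul_left]
      rw [real_inner_comm (X w) ((fderiv ℝ X w) e2), real_inner_comm (X w) (Y w)]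
      rw [hXXd w hw e2, hXY w hw]
      ring
    · rw [inner_add_left, real_inner_smul_left, real_inner_smul_left]
      rw [hYYd w hw, hYY w hw]
      ring
  -- now evaluate at the origin
  have hdX2 : DifferentiableAt ℝ (fderiv ℝ X) (0,0) :=
    ((hXsm _ hw0).fderiv_right (m := (⊤ : ℕ∞)) (by simp)).differentiableAt (by simp)
  have hXv : ∀ w ∈ W, DifferentiableAt ℝ (fun y => fderiv ℝ X y e2) w := fun w hw =>
    ((((hXsm w hw).fderiv_right (m := (⊤ : ℕ∞)) (by simp)).clm_apply contDiffAt_const)).differentiableAt (by simp)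
  -- ∂₂ ∂₁ X = 0 at origin
  have hA0 : fderiv ℝ (fun y => fderiv ℝ X y e1) (0,0) e2 = 0 := by
    have hev : (fun y => fderiv ℝ X y e1) =ᶠ[nhds ((0,0) : ℝ × ℝ)]
        fun _ => (0 : EuclideanSpace ℝ (Fin 2)) :=
      Filter.eventuallyEq_of_mem (hW.mem_nhds hw0) (fun y hy => hA y hy)
    rw [hev.fderiv_eq, fderiv_const_apply]
    simp
  -- symmetry : ∂₂ ∂₁ X = ∂₁ ∂₂ X at origin
  have hswap : fderiv ℝ (fun y => fderiv ℝ X y e1) (0,0) e2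
      = fderiv ℝ (fun y => fderiv ℝ X y e2) (0,0) e1 := by
    rw [fderiv_eval hdX2, fderiv_eval hdX2]
    have hs : IsSymmSndFDerivAt ℝ X (0,0) := (hXsm _ hw0).isSymmSndFDerivAt (by simp; exact WithTop.coe_le_coe.mpr le_top)
    exact hs e2 e1
  -- differentiate hB at origin in direction e1
  have hB0 : fderiv ℝ (fun y => fderiv ℝ X y e2) (0,0) e1 + Y (0,0) = 0 := by
    have hev : (fun y => cos y.1 • fderiv ℝ X y e2 + sin y.1 • Y y) =ᶠ[nhds ((0,0) : ℝ × ℝ)]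
        fun _ => (0 : EuclideanSpace ℝ (Fin 2)) :=
      Filter.eventuallyEq_of_mem (hW.mem_nhds hw0) (fun y hy => hB y hy)
    have hc : HasFDerivAt (fun p : ℝ × ℝ => cos p.1)
        ((-sin (0:ℝ)) • ContinuousLinearMap.fst ℝ ℝ ℝ) ((0,0) : ℝ × ℝ) :=
      (Real.hasDerivAt_cos ((0,0) : ℝ × ℝ).1).comp_hasFDerivAt ((0,0) : ℝ × ℝ) (hasFDerivAt_fst)
    have hs : HasFDerivAt (fun p : ℝ × ℝ => sin p.1)
        ((cos (0:ℝ)) • ContinuousLinearMap.fst ℝ ℝ ℝ) ((0,0) : ℝ × ℝ) :=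
      (Real.hasDerivAt_sin ((0,0) : ℝ × ℝ).1).comp_hasFDerivAt ((0,0) : ℝ × ℝ) (hasFDerivAt_fst)
    have hXv0 := (hXv _ hw0).hasFDerivAt
    have hY0 := (hdY _ hw0).hasFDerivAt
    have hsum := (hc.smul hXv0).add (hs.smul hY0)
    have h0 : fderiv ℝ (fun y => cos y.1 • fderiv ℝ X y e2 + sin y.1 • Y y) (0,0)
        = 0 := by
      rw [hev.fderiv_eq]; exact fderiv_const_apply 0
    have : fderiv ℝ (fun y => cos y.1 • fderiv ℝ X y e2 + sin y.1 • Y y) (0,0) = _ := hsum.fderiv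
    rw [h0] at this
    have happ := congrArg (fun (L : (ℝ × ℝ) →L[ℝ] EuclideanSpace ℝ (Fin 2)) => L e1) this.symm
    simp only [ContinuousLinearMap.zero_apply, ContinuousLinearMap.add_apply,
      ContinuousLinearMap.smul_apply, ContinuousLinearMap.smulRight_apply,
      ContinuousLinearMap.coe_fst', Real.cos_zero, Real.sin_zero, he1] at happ
    simpa [he1] using happ
  have hY0ne : Y (0,0) ≠ 0 := by
    intro h
    have := hYY _ hw0
    rw [h] at this
    simp at this
  apply hY0ne
  have : Y (0,0) = 0 := by
    have := hB0
    rw [← hswap, hA0] at this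
    simpa using this
  exact this

/-- There is no smooth map from a nonempty open subset of the unit sphere to the
plane whose differential at every point of the sphere is a linear isometry from
the tangent plane of the sphere to `ℝ²`. Here `f` is a smooth map defined on an
open neighborhood `U` in `ℝ³` meeting the sphere, and the tangent plane at `p`
consists of the vectors `v` with `⟪p, v⟫ = 0`. -/
theorem no_tangent_isometry_sphere_to_plane :
    ¬ ∃ (U : Set (EuclideanSpace ℝ (Fin 3)))
        (f : EuclideanSpace ℝ (Fin 3) → EuclideanSpace ℝ (Fin 2)),
      IsOpen U ∧ (U ∩ Metric.sphere 0 1).Nonempty ∧ ContDiffOn ℝ (⊤ : ℕ∞) f U ∧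
      ∀ p ∈ U ∩ Metric.sphere 0 1, ∀ v : EuclideanSpace ℝ (Fin 3),
        ⟪p, v⟫ = 0 → ‖fderiv ℝ f p v‖ = ‖v‖ := by
  rintro ⟨U, f, hU, ⟨p₀, hp₀U, hp₀s⟩, hf, hiso⟩
  have hp₀ : ‖p₀‖ = 1 := by rwa [mem_sphere_zero_iff_norm] at hp₀s
  have hq : ‖sph (0,0)‖ = 1 := by
    have := sph_mem_sphere (0,0); rwa [mem_sphere_zero_iff_norm] at this
  set R : EuclideanSpace ℝ (Fin 3) ≃ₗᵢ[ℝ] EuclideanSpace ℝ (Fin 3) :=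
    Submodule.reflection (ℝ ∙ (p₀ - sph (0,0)))ᗮ with hRdef
  have hRp : R p₀ = sph (0,0) := Submodule.reflection_sub (by rw [hp₀, hq])
  have hRq : R (sph (0,0)) = p₀ := by rw [← hRp]; exact Submodule.reflection_reflection _ _
  refine aux_core (⇑R ⁻¹' U) (f ∘ ⇑R) (hU.preimage R.continuous) ?_ ?_ ?_
  · show R (sph (0,0)) ∈ U
    rw [hRq]; exact hp₀U
  · exact hf.comp (R.contDiff.contDiffOn) (fun x hx => hx)
  · intro p hp v hv
    have hdf : DifferentiableAt ℝ f (R p) :=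
      (hf.contDiffAt (hU.mem_nhds hp.1)).differentiableAt (by simp)
    have hR : HasFDerivAt (⇑R) (R.toContinuousLinearEquiv : _ →L[ℝ] _) p := by
      have := R.toContinuousLinearEquiv.hasFDerivAt (x := p)
      simpa using this
    have hcomp : fderiv ℝ (f ∘ ⇑R) p = (fderiv ℝ f (R p)).comp
        (R.toContinuousLinearEquiv : _ →L[ℝ] _) :=
      (hdf.hasFDerivAt.comp p hR).fderiv
    have hps : R p ∈ Metric.sphere (0 : EuclideanSpace ℝ (Fin 3)) 1 := by
      rw [mem_sphere_zero_iff_norm, R.norm_map]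
      have := hp.2
      rwa [mem_sphere_zero_iff_norm] at this
    rw [hcomp]
    have hvt : ⟪R p, R v⟫ = 0 := by rw [R.inner_map_map]; exact hv
    have := hiso (R p) ⟨hp.1, hps⟩ (R v) hvt
    simp only [ContinuousLinearMap.coe_comp', Function.comp_apply,
      ContinuousLinearEquiv.coe_coe, LinearIsometryEquiv.coe_toContinuousLinearEquiv]
    rw [this, R.norm_map]
end

section
/- In the equidistant conic projection with ρ(u) = c − u, the longitude-scale error ε(u) = k(c−u)/cos u − 1 vanishes at exactly two latitudes u₁ < u₂ in (0, π/2) for suitable constants k, c, and given two fixed outer latitudes a < b one can choose k and c so that the maximum of |ε| on [a,b] is attained (with equal value) at the three points a, b, and the interior critical point, characterizing the minimax choice of standard parallels described by Euler for Delisle's map. -/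
/-!
Write `F u = (c - u) / cos u`, so that the error is `k * F u - 1`. Choose `c` with `F a = F b`.
The numerator `(c - u) sin u - cos u` of `F'` has derivative `(c - u) cos u > 0`, so by Rolle
`F` has a single critical point `m` in `(a, b)`, decreasing before it and increasing after it.
Taking `k = 2 / (F a + F m)` makes the error take the values `E, -E, E` at `a, m, b`, with
`|error| ≤ E` in between and exactly one zero on each monotone branch. This choice is optimal by
Chebyshev's alternation argument: if some `(k', c')` had maximal error below `E`, the difference
of the two errors times `cos u`, which is the affine function `(k c - k' c') + (k' - k) u`, would
be positive at `a` and `b` but negative at `m`.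
-/

open Real

/-- The longitude-scale error of the equidistant conic projection with
`ρ(u) = c − u` and cone constant `k`, at latitude `u`. -/
noncomputable def scaleError (k c u : ℝ) : ℝ := k * (c - u) / cos u - 1

/-- The maximal longitude-scale error over the band of latitudes `[a,b]`. -/
noncomputable def maxError (a b k c : ℝ) : ℝ :=
  sSup ((fun u => |scaleError k c u|) '' Set.Icc a b)

open Set

section Valley

variable {f : ℝ → ℝ} {a m b : ℝ}

theorem le_of_antitoneOn_of_monotoneOn (hanti : AntitoneOn f (Icc a m))
    (hmono : MonotoneOn f (Icc m b)) (hm : m ∈ Icc a b) {u : ℝ} (hu : u ∈ Icc a b) :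
    f m ≤ f u := by
  rcases le_total u m with h | h
  · exact hanti ⟨hu.1, h⟩ ⟨hm.1, le_rfl⟩ h
  · exact hmono ⟨le_rfl, hm.2⟩ ⟨h, hu.2⟩ h

theorem le_max_of_antitoneOn_of_monotoneOn (hanti : AntitoneOn f (Icc a m))
    (hmono : MonotoneOn f (Icc m b)) {u : ℝ} (hu : u ∈ Icc a b) :
    f u ≤ max (f a) (f b) := by
  rcases le_total u m with h | h
  · exact (hanti ⟨le_rfl, hu.1.trans h⟩ ⟨hu.1, h⟩ hu.1).trans (le_max_left _ _)
  · exact (hmono ⟨h, hu.2⟩ ⟨h.trans hu.2, le_rfl⟩ hu.2).trans (le_max_right _ _)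

theorem exists_pair_eq_of_strictAntiOn_of_strictMonoOn (hf : ContinuousOn f (Icc a b))
    (hanti : StrictAntiOn f (Icc a m)) (hmono : StrictMonoOn f (Icc m b)) (hm : m ∈ Icc a b)
    {y : ℝ} (hmy : f m < y) (hya : y < f a) (hyb : y < f b) :
    ∃ u₁ u₂, u₁ ∈ Ioo a m ∧ u₂ ∈ Ioo m b ∧ f u₁ = y ∧ f u₂ = y ∧
      ∀ u ∈ Icc a b, f u = y → u = u₁ ∨ u = u₂ := by
  obtain ⟨u₁, hu₁, hfu₁⟩ :=
    intermediate_value_Ioo' hm.1 (hf.mono (Icc_subset_Icc le_rfl hm.2)) ⟨hmy, hya⟩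
  obtain ⟨u₂, hu₂, hfu₂⟩ :=
    intermediate_value_Ioo hm.2 (hf.mono (Icc_subset_Icc hm.1 le_rfl)) ⟨hmy, hyb⟩
  refine ⟨u₁, u₂, hu₁, hu₂, hfu₁, hfu₂, fun u hu hfu => ?_⟩
  rcases le_total u m with h | h
  · exact .inl (hanti.injOn ⟨hu.1, h⟩ (Ioo_subset_Icc_self hu₁) (hfu.trans hfu₁.symm))
  · exact .inr (hmono.injOn ⟨h, hu.2⟩ (Ioo_subset_Icc_self hu₂) (hfu.trans hfu₂.symm))

theorem exists_hasDerivAt_zero_strictAntiOn_strictMonoOn {g w : ℝ → ℝ} (hab : a < b)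
    (hf : ContinuousOn f (Icc a b)) (hfab : f a = f b)
    (hderiv : ∀ x ∈ Ioo a b, HasDerivAt f (g x / w x) x) (hw : ∀ x ∈ Ioo a b, 0 < w x)
    (hg : StrictMonoOn g (Ioo a b)) :
    ∃ m ∈ Ioo a b, HasDerivAt f 0 m ∧
      StrictAntiOn f (Icc a m) ∧ StrictMonoOn f (Icc m b) := by
  obtain ⟨m, hm, hf'm⟩ := exists_hasDerivAt_eq_zero hab hf hfab hderiv
  have hgm : g m = 0 := by simpa [(hw m hm).ne'] using hf'm
  refine ⟨m, hm, (hderiv m hm).congr_deriv hf'm, ?_, ?_⟩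
  · refine strictAntiOn_of_deriv_neg (convex_Icc a m)
      (hf.mono (Icc_subset_Icc le_rfl hm.2.le)) fun x hx => ?_
    rw [interior_Icc] at hx
    have hx' : x ∈ Ioo a b := ⟨hx.1, hx.2.trans hm.2⟩
    rw [(hderiv x hx').deriv]
    exact div_neg_of_neg_of_pos (hgm ▸ hg hx' hm hx.2) (hw x hx')
  · refine strictMonoOn_of_deriv_pos (convex_Icc m b)
      (hf.mono (Icc_subset_Icc hm.1.le le_rfl)) fun x hx => ?_
    rw [interior_Icc] at hx
    have hx' : x ∈ Ioo a b := ⟨hm.1.trans hx.1, hx.2⟩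
    rw [(hderiv x hx').deriv]
    exact div_pos (hgm ▸ hg hm hx' hx.1) (hw x hx')

end Valley

theorem add_mul_pos_of_mem_Icc {p q a m b : ℝ} (hm : m ∈ Icc a b) (ha : 0 < p + q * a)
    (hb : 0 < p + q * b) : 0 < p + q * m := by
  rcases le_total 0 q with hq | hq
  · linarith [mul_le_mul_of_nonneg_left hm.1 hq]
  · linarith [mul_le_mul_of_nonpos_left hm.2 hq]

noncomputable def parallelScale (c u : ℝ) : ℝ := (c - u) / cos u

section ParallelScale

variable {a b c : ℝ}

theorem scaleError_eq (k c u : ℝ) : scaleError k c u = k * parallelScale c u - 1 := by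
  rw [scaleError, parallelScale, mul_div_assoc]

theorem parallelScale_pos {u : ℝ} (hu : u < c) (hcos : 0 < cos u) : 0 < parallelScale c u :=
  div_pos (sub_pos.2 hu) hcos

theorem continuousOn_parallelScale {s : Set ℝ} (hcos : ∀ u ∈ s, cos u ≠ 0) :
    ContinuousOn (parallelScale c) s :=
  (continuousOn_const.sub continuousOn_id).div continuousOn_cos hcos

theorem continuousOn_scaleError {k : ℝ} {s : Set ℝ} (hcos : ∀ u ∈ s, cos u ≠ 0) :
    ContinuousOn (scaleError k c) s := by
  rw [funext (scaleError_eq k c)]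
  exact (continuousOn_const.mul (continuousOn_parallelScale hcos)).sub continuousOn_const

theorem hasDerivAt_parallelScale (c : ℝ) {u : ℝ} (hu : cos u ≠ 0) :
    HasDerivAt (parallelScale c) (((c - u) * sin u - cos u) / cos u ^ 2) u := by
  refine (((hasDerivAt_id' u).const_sub c).div (hasDerivAt_cos u) hu).congr_deriv ?_
  ring

theorem strictMonoOn_sub_mul_sin_sub_cos (hbc : b ≤ c) (hcos : ∀ u ∈ Ioo a b, 0 < cos u) :
    StrictMonoOn (fun u => (c - u) * sin u - cos u) (Ioo a b) := by
  have hderiv (u : ℝ) : HasDerivAt (fun u => (c - u) * sin u - cos u) ((c - u) * cos u) u := by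
    refine ((((hasDerivAt_id' u).const_sub c).mul (hasDerivAt_sin u)).sub
      (hasDerivAt_cos u)).congr_deriv ?_
    ring
  refine strictMonoOn_of_deriv_pos (convex_Ioo a b) (by fun_prop) fun u hu => ?_
  rw [interior_Ioo] at hu
  rw [(hderiv u).deriv]
  exact mul_pos (by linarith [hu.2]) (hcos u hu)

theorem exists_parallelScale_eq (ha : 0 ≤ a) (hab : a < b) (hb : b < π / 2) :
    ∃ c, b < c ∧ parallelScale c a = parallelScale c b := by
  have hcosb : 0 < cos b := cos_pos_of_mem_Ioo ⟨by linarith [pi_pos], hb⟩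
  have hcosa : 0 < cos a := cos_pos_of_mem_Ioo ⟨by linarith [pi_pos], by linarith⟩
  have hD : 0 < cos a - cos b := sub_pos.2 (cos_lt_cos_of_nonneg_of_le_pi ha (by linarith) hab)
  refine ⟨(b * cos a - a * cos b) / (cos a - cos b), ?_, ?_⟩
  · rw [lt_div_iff₀ hD]
    nlinarith
  · rw [parallelScale, parallelScale, div_eq_div_iff hcosa.ne' hcosb.ne']
    field_simp
    ring

end ParallelScale

section Minimax

variable {a b k c : ℝ}

theorem abs_scaleError_le_maxError (hcos : ∀ u ∈ Icc a b, cos u ≠ 0) {u : ℝ}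
    (hu : u ∈ Icc a b) : |scaleError k c u| ≤ maxError a b k c :=
  le_csSup (isCompact_Icc.bddAbove_image (continuousOn_scaleError hcos).abs) ⟨u, hu, rfl⟩

theorem scaleError_sub_scaleError_mul_cos (k c k' c' : ℝ) {u : ℝ} (hu : cos u ≠ 0) :
    (scaleError k c u - scaleError k' c' u) * cos u = (k * c - k' * c') + (k' - k) * u := by
  simp only [scaleError]
  field_simp
  ring

theorem le_maxError_of_equioscillation {m E : ℝ} (hcos : ∀ u ∈ Icc a b, 0 < cos u)
    (hm : m ∈ Ioo a b) (ha : scaleError k c a = E) (hb : scaleError k c b = E)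
    (hmE : scaleError k c m = -E) (k' c' : ℝ) : E ≤ maxError a b k' c' := by
  by_contra! hlt
  have hbound (u) (hu : u ∈ Icc a b) : -E < scaleError k' c' u ∧ scaleError k' c' u < E :=
    abs_lt.1 <|
    (abs_scaleError_le_maxError (k := k') (c := c') (fun u hu => (hcos u hu).ne') hu).trans_lt
      hlt
  have hdiff (u) (hu : u ∈ Icc a b) :
      (k * c - k' * c') + (k' - k) * u = (scaleError k c u - scaleError k' c' u) * cos u :=
    (scaleError_sub_scaleError_mul_cos k c k' c' (hcos u hu).ne').symm
  have hab : a ≤ b := (hm.1.trans hm.2).le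
  have hm' : m ∈ Icc a b := Ioo_subset_Icc_self hm
  have hpos (u) (hu : u ∈ Icc a b) (hu' : scaleError k c u = E) :
      0 < (k * c - k' * c') + (k' - k) * u := by
    rw [hdiff u hu, hu']
    exact mul_pos (by linarith [hbound u hu]) (hcos u hu)
  have hpos_m := add_mul_pos_of_mem_Icc hm' (hpos a (left_mem_Icc.2 hab) ha)
    (hpos b (right_mem_Icc.2 hab) hb)
  rw [hdiff m hm', hmE] at hpos_m
  linarith [(mul_pos_iff_of_pos_right (hcos m hm')).1 hpos_m, hbound m hm']

end Minimax

theorem exists_scaleError_equioscillation {a b : ℝ} (ha : 0 ≤ a) (hab : a < b)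
    (hb : b < π / 2) :
    ∃ k c m, 0 < k ∧ m ∈ Ioo a b ∧ HasDerivAt (scaleError k c) 0 m ∧
      StrictAntiOn (scaleError k c) (Icc a m) ∧ StrictMonoOn (scaleError k c) (Icc m b) ∧
      scaleError k c b = scaleError k c a ∧ scaleError k c m = -scaleError k c a := by
  have hcos (u) (hu : u ∈ Icc a b) : 0 < cos u :=
    cos_pos_of_mem_Ioo ⟨by linarith [hu.1, pi_pos], hu.2.trans_lt hb⟩
  have hcos' (u) (hu : u ∈ Ioo a b) : 0 < cos u := hcos u (Ioo_subset_Icc_self hu)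
  obtain ⟨c, hbc, hFab⟩ := exists_parallelScale_eq ha hab hb
  obtain ⟨m, hm, hF'm, hFanti, hFmono⟩ := exists_hasDerivAt_zero_strictAntiOn_strictMonoOn hab
    (continuousOn_parallelScale fun u hu => (hcos u hu).ne') hFab
    (fun u hu => hasDerivAt_parallelScale c (hcos' u hu).ne')
    (fun u hu => pow_pos (hcos' u hu) 2) (strictMonoOn_sub_mul_sin_sub_cos hbc.le hcos')
  set F := parallelScale c
  have hFm : 0 < F m := parallelScale_pos (hm.2.trans hbc) (hcos' m hm)
  have hsum : 0 < F a + F m := by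
    linarith [hFanti ⟨le_rfl, hm.1.le⟩ ⟨hm.1.le, le_rfl⟩ hm.1]
  set k := 2 / (F a + F m) with hk_def
  have hk : 0 < k := div_pos two_pos hsum
  have hε : scaleError k c = (fun x => k * x - 1) ∘ F := funext (scaleError_eq k c)
  have haffine : StrictMono fun x : ℝ => k * x - 1 := fun x y h => by
    simp only
    gcongr
  refine ⟨k, c, m, hk, hm, ?_, hε ▸ haffine.comp_strictAntiOn hFanti,
    hε ▸ haffine.comp_strictMonoOn hFmono, by simp only [hε, Function.comp_apply, hFab], ?_⟩
  · rw [hε, ← mul_zero k]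
    exact (hF'm.const_mul k).sub_const 1
  · rw [hε, Function.comp_apply, Function.comp_apply, hk_def]
    field_simp
    ring

/-- Euler's account of Delisle's choice of standard parallels: for fixed outer
latitudes `0 < a < b < π/2` there are `k > 0` and `c` minimizing the maximal
longitude-scale error `max_{u∈[a,b]} |k(c−u)/cos u − 1|` of the equidistant conic
projection `ρ(u) = c − u`; for this minimax choice the error vanishes at exactly
two latitudes `u₁ < u₂` inside `(a,b)` (the standard parallels), and the maximal
error is attained, with a common value, at the three points `a`, `b` and an
interior critical point `u'` of the error (equioscillation). -/
theorem delisle_minimax_standard_parallels (a b : ℝ)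
    (ha : 0 < a) (hab : a < b) (hb : b < π / 2) :
    ∃ k c : ℝ, 0 < k ∧
      (∀ k' c' : ℝ, 0 < k' → maxError a b k c ≤ maxError a b k' c') ∧
      (∃ u₁ u₂ : ℝ, u₁ ∈ Set.Ioo a b ∧ u₂ ∈ Set.Ioo a b ∧ u₁ < u₂ ∧
        scaleError k c u₁ = 0 ∧ scaleError k c u₂ = 0 ∧
        ∀ u ∈ Set.Icc a b, scaleError k c u = 0 → u = u₁ ∨ u = u₂) ∧
      (∃ u' ∈ Set.Ioo a b, deriv (scaleError k c) u' = 0 ∧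
        |scaleError k c a| = maxError a b k c ∧
        |scaleError k c b| = maxError a b k c ∧
        |scaleError k c u'| = maxError a b k c) := by
  have hcos (u) (hu : u ∈ Icc a b) : 0 < cos u :=
    cos_pos_of_mem_Ioo ⟨by linarith [hu.1, pi_pos], hu.2.trans_lt hb⟩
  obtain ⟨k, c, m, hk, hm, hderiv, hanti, hmono, hba, hma⟩ :=
    exists_scaleError_equioscillation ha.le hab hb
  have hm' : m ∈ Icc a b := Ioo_subset_Icc_self hm
  have hεa : 0 < scaleError k c a := by
    linarith [hanti ⟨le_rfl, hm.1.le⟩ ⟨hm.1.le, le_rfl⟩ hm.1]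
  have hbound (u) (hu : u ∈ Icc a b) : |scaleError k c u| ≤ scaleError k c a := by
    refine abs_le.2 ⟨?_, ?_⟩
    · simpa [hma] using
        le_of_antitoneOn_of_monotoneOn hanti.antitoneOn hmono.monotoneOn hm' hu
    · simpa [hba] using
        le_max_of_antitoneOn_of_monotoneOn hanti.antitoneOn hmono.monotoneOn hu
  have hmax : maxError a b k c = scaleError k c a :=
    IsGreatest.csSup_eq ⟨⟨a, left_mem_Icc.2 hab.le, abs_of_pos hεa⟩,
      by rintro _ ⟨u, hu, rfl⟩; exact hbound u hu⟩
  obtain ⟨u₁, u₂, hu₁, hu₂, h₁, h₂, hzeros⟩ := exists_pair_eq_of_strictAntiOn_of_strictMonoOn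
    (continuousOn_scaleError fun u hu => (hcos u hu).ne') hanti hmono hm' (by linarith) hεa
    (hba ▸ hεa)
  refine ⟨k, c, hk,
    fun k' c' _ => hmax ▸ le_maxError_of_equioscillation hcos hm rfl hba hma k' c',
    ⟨u₁, u₂, ⟨hu₁.1, hu₁.2.trans hm.2⟩, ⟨hm.1.trans hu₂.1, hu₂.2⟩, hu₁.2.trans hu₂.1, h₁, h₂,
      hzeros⟩, m, hm, hderiv.deriv, ?_, ?_, ?_⟩ <;> rw [hmax]
  · exact abs_of_pos hεa
  · rw [hba, abs_of_pos hεa]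
  · rw [hma, abs_neg, abs_of_pos hεa]
end

section
/- No smooth map from a nonempty open subset of the unit sphere to the plane can both send every geodesic (great-circle arc) to a straight-line segment and be conformal; that is, no geodesic-preserving conformal map of an open spherical region to the plane exists. -/
open scoped RealInnerProductSpace
open Real Set

local notation "E3" => EuclideanSpace ℝ (Fin 3)
local notation "E2" => EuclideanSpace ℝ (Fin 2)

lemma mem_sphere_of_inner {x : E3} (h : ⟪x,x⟫ = 1) : x ∈ Metric.sphere (0:E3) 1 := by
  rw [mem_sphere_zero_iff_norm]
  have h2 : ‖x‖^2 = 1 := by rw [← real_inner_self_eq_norm_sq]; exact h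
  nlinarith [norm_nonneg x]

lemma gamma_zero (x y : E3) : Real.cos 0 • x + Real.sin 0 • y = x := by simp

lemma gamma'_zero (x y : E3) : (-Real.sin 0) • x + Real.cos 0 • y = y := by simp

lemma two_eqs_zero {a b z0 z1 : ℝ} (hab : ¬(a = 0 ∧ b = 0))
    (h1 : a*z0 + b*z1 = 0) (h2 : b*z0 - a*z1 = 0) : z0 = 0 ∧ z1 = 0 := by
  have hab2 : 0 < a^2 + b^2 := by
    rcases not_and_or.1 hab with h | h <;> positivity
  have e0 : (a^2+b^2) * z0 = 0 := by linear_combination a*h1 + b*h2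
  have e1 : (a^2+b^2) * z1 = 0 := by linear_combination b*h1 - a*h2
  constructor
  · rcases mul_eq_zero.1 e0 with h | h
    · exact absurd h (by positivity : (0:ℝ) < a^2+b^2).ne'
    · exact h
  · rcases mul_eq_zero.1 e1 with h | h
    · exact absurd h (by positivity : (0:ℝ) < a^2+b^2).ne'
    · exact h

lemma ker2 {a b : ℝ} (hab : ¬(a = 0 ∧ b = 0)) {y z : E2}
    (hy : a * y 0 + b * y 1 = 0) (hz : a * z 0 + b * z 1 = 0) (hy0 : y ≠ 0) :
    ∃ k : ℝ, z = k • y := by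
  have hcross : z 0 * y 1 = z 1 * y 0 := by
    rcases not_and_or.1 hab with h | h
    · have h1 : a * (z 0 * y 1 - z 1 * y 0) = 0 := by
        linear_combination (y 1) * hz - (z 1) * hy
      rcases mul_eq_zero.1 h1 with h' | h'
      · exact absurd h' h
      · linarith
    · have h1 : b * (z 0 * y 1 - z 1 * y 0) = 0 := by
        linear_combination (-(y 0)) * hz + (z 0) * hy
      rcases mul_eq_zero.1 h1 with h' | h'
      · exact absurd h' h
      · linarith
  have hy' : y 0 ≠ 0 ∨ y 1 ≠ 0 := by
    by_contra hcon
    push_neg at hcon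
    apply hy0
    ext i
    fin_cases i
    · exact hcon.1
    · exact hcon.2
  rcases hy' with h | h
  · refine ⟨z 0 / y 0, ?_⟩
    ext i
    fin_cases i
    · show z 0 = (z 0 / y 0) * y 0
      field_simp
    · show z 1 = (z 0 / y 0) * y 1
      field_simp
      nlinarith [hcross]
  · refine ⟨z 1 / y 1, ?_⟩
    ext i
    fin_cases i
    · show z 0 = (z 1 / y 1) * y 0
      field_simp
      nlinarith [hcross]
    · show z 1 = (z 1 / y 1) * y 1
      field_simp
lemma circle_hasDerivAt (q u : E3) (t : ℝ) :
    HasDerivAt (fun s : ℝ => Real.cos s • q + Real.sin s • u)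
      ((-Real.sin t) • q + Real.cos t • u) t := by
  exact ((Real.hasDerivAt_cos t).smul_const q).add ((Real.hasDerivAt_sin t).smul_const u)

example (q u : E3) (hq : ⟪q,q⟫ = 1) (hu : ⟪u,u⟫ = 1) (hqu : ⟪q,u⟫ = 0) (s t : ℝ) :
    ⟪Real.cos s • q + Real.sin s • u, Real.cos t • q + Real.sin t • u⟫
      = Real.cos s * Real.cos t + Real.sin s * Real.sin t := by
  have hqu' : ⟪u,q⟫ = 0 := by rw [real_inner_comm]; exact hqu
  simp only [inner_add_left, inner_add_right, real_inner_smul_left, real_inner_smul_right,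
    hq, hu, hqu, hqu']
  ring

lemma inner_comb2 {q u : E3} (hq : ⟪q,q⟫ = 1) (hu : ⟪u,u⟫ = 1) (hqu : ⟪q,u⟫ = 0)
    (α β α' β' : ℝ) : ⟪α • q + β • u, α' • q + β' • u⟫ = α*α' + β*β' := by
  have hqu' : ⟪u,q⟫ = 0 := by rw [real_inner_comm]; exact hqu
  simp only [inner_add_left, inner_add_right, real_inner_smul_left, real_inner_smul_right,
    hq, hu, hqu, hqu']
  ring

lemma arc_main
    {V : Set E3} (hV : IsOpen V) {f : E3 → E2}
    (hf : ContDiffOn ℝ (⊤ : ℕ∞) f V)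
    {lam : E3 → ℝ}
    (hconf : ∀ p ∈ V ∩ Metric.sphere (0:E3) 1, 0 < lam p ∧
      ∀ v w : E3, ⟪p, v⟫ = 0 → ⟪p, w⟫ = 0 →
        ⟪fderiv ℝ f p v, fderiv ℝ f p w⟫ = lam p * ⟪v, w⟫)
    {q u : E3} (hq : ⟪q,q⟫ = 1) (hu : ⟪u,u⟫ = 1) (hqu : ⟪q,u⟫ = 0)
    {T : ℝ} (hT : 0 < T)
    (hmemV : ∀ t ∈ Icc (0:ℝ) T, (Real.cos t • q + Real.sin t • u) ∈ V)
    {a b c : ℝ} (hab : ¬(a = 0 ∧ b = 0))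
    (hline : ∀ t ∈ Icc (0:ℝ) T,
      a * f (Real.cos t • q + Real.sin t • u) 0 + b * f (Real.cos t • q + Real.sin t • u) 1 = c) :
    (∀ t ∈ Icc (0:ℝ) T,
      a * (fderiv ℝ f (Real.cos t • q + Real.sin t • u) ((-Real.sin t) • q + Real.cos t • u)) 0
      + b * (fderiv ℝ f (Real.cos t • q + Real.sin t • u) ((-Real.sin t) • q + Real.cos t • u)) 1
      = 0)
    ∧ f (Real.cos T • q + Real.sin T • u) ≠ f (Real.cos 0 • q + Real.sin 0 • u) := by
  set γ : ℝ → E3 := fun t => Real.cos t • q + Real.sin t • u with hγdef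
  set γ' : ℝ → E3 := fun t => (-Real.sin t) • q + Real.cos t • u with hγ'def
  set z : ℝ → E2 := fun t => fderiv ℝ f (γ t) (γ' t) with hzdef
  have hsph : ∀ t, γ t ∈ Metric.sphere (0:E3) 1 := by
    intro t
    rw [mem_sphere_zero_iff_norm]
    have h1 : ⟪γ t, γ t⟫ = 1 := by
      rw [hγdef]
      simp only
      rw [inner_comb2 hq hu hqu]
      nlinarith [Real.sin_sq_add_cos_sq t]
    have h2 : ‖γ t‖^2 = 1 := by rw [← real_inner_self_eq_norm_sq]; exact h1
    nlinarith [norm_nonneg (γ t)]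
  have hderiv : ∀ t ∈ Icc (0:ℝ) T, HasDerivAt (fun s => f (γ s)) (z t) t := by
    intro t ht
    have hd : DifferentiableAt ℝ f (γ t) :=
      (hf.differentiableOn (by simp)).differentiableAt (hV.mem_nhds (hmemV t ht))
    exact hd.hasFDerivAt.comp_hasDerivAt t (circle_hasDerivAt q u t)
  have hcoord : ∀ (i : Fin 2), ∀ t ∈ Icc (0:ℝ) T,
      HasDerivAt (fun s => f (γ s) i) (z t i) t := by
    intro i t ht
    exact (EuclideanSpace.proj i).hasFDerivAt.comp_hasDerivAt t (hderiv t ht)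
  have hφd : ∀ t ∈ Icc (0:ℝ) T,
      HasDerivAt (fun s => a * f (γ s) 0 + b * f (γ s) 1) (a * z t 0 + b * z t 1) t := by
    intro t ht
    exact ((hcoord 0 t ht).const_mul a).add ((hcoord 1 t ht).const_mul b)
  have hkill : ∀ t ∈ Icc (0:ℝ) T, a * z t 0 + b * z t 1 = 0 := by
    intro t ht
    have h1 := ((hφd t ht).hasDerivWithinAt (s := Icc (0:ℝ) T)).derivWithin
      ((uniqueDiffOn_Icc hT) t ht)
    have h2 : HasDerivWithinAt (fun s => a * f (γ s) 0 + b * f (γ s) 1) 0 (Icc (0:ℝ) T) t := by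
      exact (hasDerivWithinAt_const t (Icc (0:ℝ) T) c).congr (fun y hy => hline y hy) (hline t ht)
    rw [← h1, h2.derivWithin ((uniqueDiffOn_Icc hT) t ht)]
  refine ⟨hkill, ?_⟩
  intro heq
  have hψd : ∀ t ∈ Icc (0:ℝ) T,
      HasDerivAt (fun s => b * f (γ s) 0 - a * f (γ s) 1) (b * z t 0 - a * z t 1) t := by
    intro t ht
    exact ((hcoord 0 t ht).const_mul b).sub ((hcoord 1 t ht).const_mul a)
  have hcont : ContinuousOn (fun s => b * f (γ s) 0 - a * f (γ s) 1) (Icc (0:ℝ) T) := by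
    intro t ht
    exact ((hψd t ht).continuousAt).continuousWithinAt
  have hIeq : (fun s => b * f (γ s) 0 - a * f (γ s) 1) 0 = (fun s => b * f (γ s) 0 - a * f (γ s) 1) T := by
    simp only
    have : γ T = Real.cos T • q + Real.sin T • u := rfl
    rw [show f (γ 0) = f (γ T) from heq.symm]
  obtain ⟨ξ, hξI, hξ0⟩ := exists_hasDerivAt_eq_zero hT hcont hIeq
    (fun x hx => hψd x (Ioo_subset_Icc_self hx))
  have hξIcc : ξ ∈ Icc (0:ℝ) T := Ioo_subset_Icc_self hξI
  obtain ⟨hz0, hz1⟩ := two_eqs_zero hab (hkill ξ hξIcc) hξ0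
  have hzzero : z ξ = 0 := by
    ext i
    fin_cases i
    · exact hz0
    · exact hz1
  have htan : ⟪γ ξ, γ' ξ⟫ = 0 := by
    rw [hγdef, hγ'def]
    simp only
    rw [inner_comb2 hq hu hqu]
    ring
  have htan2 : ⟪γ' ξ, γ' ξ⟫ = 1 := by
    rw [hγ'def]
    simp only
    rw [inner_comb2 hq hu hqu]
    nlinarith [Real.sin_sq_add_cos_sq ξ]
  obtain ⟨hlampos, hcf⟩ := hconf (γ ξ) ⟨hmemV ξ hξIcc, hsph ξ⟩
  have hkey := hcf (γ' ξ) (γ' ξ) htan htan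
  rw [htan2] at hkey
  rw [hzdef] at hzzero
  simp only at hzzero
  rw [hzzero] at hkey
  simp at hkey
  nlinarith [hlampos]

lemma rank_span_pair {x y : E3} (h : ∀ s t : ℝ, s • x + t • y = 0 → s = 0 ∧ t = 0) :
    Module.finrank ℝ (Submodule.span ℝ {x, y} : Submodule ℝ E3) = 2 := by
  have hli : LinearIndependent ℝ ![x, y] := LinearIndependent.pair_iff.2 h
  have hr : Set.range ![x, y] = {x, y} := by
    simp [Matrix.range_cons, Matrix.range_empty, Set.pair_comm]
  rw [← hr, finrank_span_eq_card hli, Fintype.card_fin]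

lemma curve_inner_one {q u : E3} (hq : ⟪q,q⟫ = (1:ℝ)) (hu : ⟪u,u⟫ = (1:ℝ))
    (hqu : ⟪q,u⟫ = (0:ℝ)) (t : ℝ) :
    ⟪Real.cos t • q + Real.sin t • u, Real.cos t • q + Real.sin t • u⟫ = (1:ℝ) := by
  rw [inner_comb2 hq hu hqu]
  linear_combination Real.sin_sq_add_cos_sq t

lemma aux_one_sub_sq_pos {x : ℝ} (h0 : 0 < x) (h1 : x < 1) : (0:ℝ) < 1 - x^2 := by nlinarith

lemma final_contra {cr sr sd cd : ℝ} (hpyth : sr^2+cr^2 = 1) (hcd : cd = cr^2)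
    (hsd2 : sd^2 = 1 - cd^2) (hcrpos : 0 < cr) (hcrlt1 : cr < 1) (hsrpos : 0 < sr)
    (hsdne : sd ≠ 0) (h : (1:ℝ) = 2*(sd⁻¹*(sr*cr))^2) : False := by
  have h2 : sd^2 = 2*(sr*cr)^2 := by
    field_simp at h
    linarith
  have h3 : (0:ℝ) < 1 - cr^2 := by nlinarith
  nlinarith [h2, hsd2, hpyth, h3]

lemma inner_self_pos' {x : E2} (h : x ≠ 0) : (0:ℝ) < ⟪x,x⟫ := by
  rw [real_inner_self_eq_norm_sq]
  have hn : 0 < ‖x‖ := norm_pos_iff.2 h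
  positivity

lemma inner_expand {X Y : E2} (h : ⟪X, Y⟫ = (0:ℝ)) (h' : ⟪Y, X⟫ = (0:ℝ)) :
    ⟪Y - X, Y - X⟫ = ⟪X,X⟫ + ⟪Y,Y⟫ := by
  rw [inner_sub_left, inner_sub_right, inner_sub_right, h, h']
  ring
set_option maxHeartbeats 1600000 in
/-- No smooth map from a nonempty open subset of the unit sphere to the plane is
simultaneously geodesic and conformal. Here `f`, smooth on an open `V ⊆ ℝ³`
meeting the sphere, is geodesic if it sends every connected great-circle arc in
its domain (a connected subset of the intersection of the sphere with a
2-dimensional plane through the origin) into a straight line, and conformal if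
its differential on each tangent plane is a similarity of some factor
`λ(p) > 0`. -/
theorem no_geodesic_conformal_map :
    ¬ ∃ (V : Set (EuclideanSpace ℝ (Fin 3)))
        (f : EuclideanSpace ℝ (Fin 3) → EuclideanSpace ℝ (Fin 2))
        (lam : EuclideanSpace ℝ (Fin 3) → ℝ),
      IsOpen V ∧ (V ∩ Metric.sphere 0 1).Nonempty ∧ ContDiffOn ℝ (⊤ : ℕ∞) f V ∧
      -- conformality
      (∀ p ∈ V ∩ Metric.sphere 0 1, 0 < lam p ∧
        ∀ v w : EuclideanSpace ℝ (Fin 3), ⟪p, v⟫ = 0 → ⟪p, w⟫ = 0 →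
          ⟪fderiv ℝ f p v, fderiv ℝ f p w⟫ = lam p * ⟪v, w⟫) ∧
      -- geodesic: every connected great-circle arc in the domain is sent into a line
      (∀ P : Submodule ℝ (EuclideanSpace ℝ (Fin 3)), Module.finrank ℝ P = 2 →
        ∀ A : Set (EuclideanSpace ℝ (Fin 3)),
          A ⊆ V ∩ Metric.sphere 0 1 ∩ (P : Set (EuclideanSpace ℝ (Fin 3))) →
          IsPreconnected A →
          ∃ a b c : ℝ, (a, b) ≠ (0, 0) ∧
            ∀ p ∈ A, a * f p 0 + b * f p 1 = c) := by
  rintro ⟨V, f, lam, hV, ⟨p, hpV, hpS⟩, hf, hconf, hgeo⟩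
  -- basic facts about p
  have hpnorm : ‖p‖ = 1 := by rwa [mem_sphere_zero_iff_norm] at hpS
  have hpp : ⟪p,p⟫ = (1:ℝ) := by
    rw [real_inner_self_eq_norm_sq, hpnorm]; norm_num
  have hpne : p ≠ 0 := by
    intro h; rw [h, norm_zero] at hpnorm; norm_num at hpnorm
  -- orthonormal tangent vectors v, w
  haveI : Fact (Module.finrank ℝ (EuclideanSpace ℝ (Fin 3)) = 2 + 1) :=
    ⟨by simp [finrank_euclideanSpace_fin]⟩
  let B := OrthonormalBasis.fromOrthogonalSpanSingleton (𝕜 := ℝ) 2 hpne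
  obtain ⟨v, hvdef⟩ : ∃ v : E3, v = (B 0 : E3) := ⟨_, rfl⟩
  obtain ⟨w, hwdef⟩ : ∃ w : E3, w = (B 1 : E3) := ⟨_, rfl⟩
  have hBon := B.orthonormal
  have hvv : ⟪v,v⟫ = (1:ℝ) := by
    rw [hvdef, ← Submodule.coe_inner]
    have := hBon.1 0
    rw [real_inner_self_eq_norm_sq, this]; norm_num
  have hww : ⟪w,w⟫ = (1:ℝ) := by
    rw [hwdef, ← Submodule.coe_inner]
    have := hBon.1 1
    rw [real_inner_self_eq_norm_sq, this]; norm_num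
  have hvw : ⟪v,w⟫ = (0:ℝ) := by
    rw [hvdef, hwdef, ← Submodule.coe_inner]
    exact hBon.2 (by decide)
  have hpv : ⟪p,v⟫ = (0:ℝ) := by
    have hmem : (B 0 : E3) ∈ (ℝ ∙ p)ᗮ := (B 0).2
    rw [hvdef]
    exact (Submodule.mem_orthogonal _ _).1 hmem p (Submodule.mem_span_singleton_self p)
  have hpw : ⟪p,w⟫ = (0:ℝ) := by
    have hmem : (B 1 : E3) ∈ (ℝ ∙ p)ᗮ := (B 1).2
    rw [hwdef]
    exact (Submodule.mem_orthogonal _ _).1 hmem p (Submodule.mem_span_singleton_self p)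
  have hvp : ⟪v,p⟫ = (0:ℝ) := by rw [real_inner_comm]; exact hpv
  have hwp : ⟪w,p⟫ = (0:ℝ) := by rw [real_inner_comm]; exact hpw
  have hwv : ⟪w,v⟫ = (0:ℝ) := by rw [real_inner_comm]; exact hvw
  -- choose ε and r
  obtain ⟨ε, hεpos, hball⟩ := Metric.isOpen_iff.1 hV p hpV
  obtain ⟨r, hrdef⟩ : ∃ x : ℝ, x = min (ε/2) (π/4) := ⟨_, rfl⟩
  have hrpos : 0 < r := by rw [hrdef]; exact lt_min (by linarith) (by positivity)
  have hrpi4 : r ≤ π/4 := by rw [hrdef]; exact min_le_right _ _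
  have hrε : r < ε := by rw [hrdef]; exact lt_of_le_of_lt (min_le_left _ _) (by linarith)
  obtain ⟨cr, hcrdef⟩ : ∃ x : ℝ, x = Real.cos r := ⟨_, rfl⟩
  obtain ⟨sr, hsrdef⟩ : ∃ x : ℝ, x = Real.sin r := ⟨_, rfl⟩
  have hpyth : sr^2 + cr^2 = 1 := by rw [hsrdef, hcrdef]; exact Real.sin_sq_add_cos_sq r
  have hcrpos : 0 < cr := by
    rw [hcrdef]
    exact Real.cos_pos_of_mem_Ioo ⟨by nlinarith [Real.pi_pos], by nlinarith [Real.pi_pos]⟩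
  have hsrpos : 0 < sr := by
    rw [hsrdef]
    exact Real.sin_pos_of_pos_of_lt_pi hrpos (by nlinarith [Real.pi_pos])
  have hcrlt1 : cr < 1 := by nlinarith
  obtain ⟨cd, hcddef⟩ : ∃ x : ℝ, x = cr^2 := ⟨_, rfl⟩
  have hcdpos : 0 < cd := by rw [hcddef]; positivity
  have hcdlt1 : cd < 1 := by nlinarith
  obtain ⟨sd, hsddef⟩ : ∃ x : ℝ, x = Real.sqrt (1 - cd^2) := ⟨_, rfl⟩
  have hsdpos : 0 < sd := by rw [hsddef]; exact Real.sqrt_pos.2 (by nlinarith)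
  have hsd2 : sd^2 = 1 - cd^2 := by rw [hsddef]; exact Real.sq_sqrt (by nlinarith)
  have hsdne : sd ≠ 0 := ne_of_gt hsdpos
  obtain ⟨d, hddef⟩ : ∃ x : ℝ, x = Real.arccos cd := ⟨_, rfl⟩
  have hdpos : 0 < d := by rw [hddef]; exact Real.arccos_pos.2 hcdlt1
  have hdle : d ≤ π/2 := by rw [hddef]; exact Real.arccos_le_pi_div_two.2 hcdpos.le
  have hcosd : Real.cos d = cd := by rw [hddef]; exact Real.cos_arccos (by linarith) hcdlt1.le
  have hsind : Real.sin d = sd := by rw [hddef, Real.sin_arccos, hsddef]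
  -- membership helper
  have hmem : ∀ y : E3, ⟪y,y⟫ = (1:ℝ) → cr ≤ ⟪p,y⟫ → y ∈ V := by
    intro y hyy hpy
    apply hball
    rw [Metric.mem_ball, dist_eq_norm]
    have hsub : ⟪y - p, y - p⟫ = 2 - 2*⟪p,y⟫ := by
      simp only [inner_sub_left, inner_sub_right]
      rw [real_inner_comm y p, hyy, hpp]; ring
    have hnorm2 : ‖y - p‖^2 = 2 - 2*⟪p,y⟫ := by
      rw [← real_inner_self_eq_norm_sq]; exact hsub
    have hcr' : 1 - r^2/2 ≤ cr := by rw [hcrdef]; exact Real.one_sub_sq_div_two_le_cos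
    have hle : ‖y - p‖^2 ≤ r^2 := by nlinarith
    nlinarith [norm_nonneg (y - p)]
  -- the key points and tangent vectors
  obtain ⟨p₁, hp₁def⟩ : ∃ x : E3, x = cr • p + sr • v := ⟨_, rfl⟩
  obtain ⟨p₂, hp₂def⟩ : ∃ x : E3, x = cr • p + sr • w := ⟨_, rfl⟩
  obtain ⟨t₁, ht₁def⟩ : ∃ x : E3, x = (-sr) • p + cr • v := ⟨_, rfl⟩
  obtain ⟨t₂, ht₂def⟩ : ∃ x : E3, x = (-sr) • p + cr • w := ⟨_, rfl⟩
  obtain ⟨uu, huudef⟩ : ∃ x : E3, x = sd⁻¹ • (p₂ - cd • p₁) := ⟨_, rfl⟩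
  obtain ⟨u₂, hu₂def⟩ : ∃ x : E3, x = (-sd) • p₁ + cd • uu := ⟨_, rfl⟩
  -- inner product catalogue
  have h_pp1 : ⟪p,p₁⟫ = cr := by
    rw [hp₁def]
    simp only [inner_add_right, real_inner_smul_right, hpp, hpv]
    ring
  have h_pp2 : ⟪p,p₂⟫ = cr := by
    rw [hp₂def]
    simp only [inner_add_right, real_inner_smul_right, hpp, hpw]
    ring
  have h_p1p1 : ⟪p₁,p₁⟫ = (1:ℝ) := by
    rw [hp₁def]
    simp only [inner_add_left, inner_add_right, real_inner_smul_left, real_inner_smul_right,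
      hpp, hvv, hpv, hvp]
    linear_combination hpyth
  have h_p2p2 : ⟪p₂,p₂⟫ = (1:ℝ) := by
    rw [hp₂def]
    simp only [inner_add_left, inner_add_right, real_inner_smul_left, real_inner_smul_right,
      hpp, hww, hpw, hwp]
    linear_combination hpyth
  have h_p1p2 : ⟪p₁,p₂⟫ = cd := by
    rw [hp₁def, hp₂def]
    simp only [inner_add_left, inner_add_right, real_inner_smul_left, real_inner_smul_right,
      hpp, hpv, hpw, hvp, hvw]
    rw [hcddef]; ring
  have h_p2p1 : ⟪p₂,p₁⟫ = cd := by rw [real_inner_comm]; exact h_p1p2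
  have h_p1t1 : ⟪p₁,t₁⟫ = (0:ℝ) := by
    rw [hp₁def, ht₁def]
    simp only [inner_add_left, inner_add_right, real_inner_smul_left, real_inner_smul_right,
      hpp, hvv, hpv, hvp]
    ring
  have h_t1p1 : ⟪t₁,p₁⟫ = (0:ℝ) := by rw [real_inner_comm]; exact h_p1t1
  have h_t1t1 : ⟪t₁,t₁⟫ = (1:ℝ) := by
    rw [ht₁def]
    simp only [inner_add_left, inner_add_right, real_inner_smul_left, real_inner_smul_right,
      hpp, hvv, hpv, hvp]
    linear_combination hpyth
  have h_t1p2 : ⟪t₁,p₂⟫ = -(sr*cr) := by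
    rw [ht₁def, hp₂def]
    simp only [inner_add_left, inner_add_right, real_inner_smul_left, real_inner_smul_right,
      hpp, hpv, hpw, hvp, hvw]
    ring
  have h_p2t2 : ⟪p₂,t₂⟫ = (0:ℝ) := by
    rw [hp₂def, ht₂def]
    simp only [inner_add_left, inner_add_right, real_inner_smul_left, real_inner_smul_right,
      hpp, hww, hpw, hwp]
    ring
  have h_t2p2 : ⟪t₂,p₂⟫ = (0:ℝ) := by rw [real_inner_comm]; exact h_p2t2
  have h_t2t2 : ⟪t₂,t₂⟫ = (1:ℝ) := by
    rw [ht₂def]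
    simp only [inner_add_left, inner_add_right, real_inner_smul_left, real_inner_smul_right,
      hpp, hww, hpw, hwp]
    linear_combination hpyth
  have h_t2p1 : ⟪t₂,p₁⟫ = -(sr*cr) := by
    rw [ht₂def, hp₁def]
    simp only [inner_add_left, inner_add_right, real_inner_smul_left, real_inner_smul_right,
      hpp, hpv, hpw, hwp, hwv]
    ring
  have huuIn : ∀ x : E3, ⟪x,uu⟫ = sd⁻¹*(⟪x,p₂⟫ - cd*⟪x,p₁⟫) := by
    intro x
    rw [huudef, real_inner_smul_right, inner_sub_right, real_inner_smul_right]
  have h_puu : ⟪p,uu⟫ = sd⁻¹*(cr - cd*cr) := by rw [huuIn, h_pp2, h_pp1]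
  have h_p1uu : ⟪p₁,uu⟫ = (0:ℝ) := by rw [huuIn, h_p1p2, h_p1p1]; ring
  have h_uup1 : ⟪uu,p₁⟫ = (0:ℝ) := by rw [real_inner_comm]; exact h_p1uu
  have h_p2uu : ⟪p₂,uu⟫ = sd := by
    rw [huuIn, h_p2p2, h_p2p1]
    field_simp
    linear_combination -hsd2
  have h_uup2 : ⟪uu,p₂⟫ = sd := by rw [real_inner_comm]; exact h_p2uu
  have h_uuuu : ⟪uu,uu⟫ = (1:ℝ) := by
    rw [huuIn uu, h_uup2, h_uup1]
    field_simp
    ring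
  have h_t1uu : ⟪t₁,uu⟫ = -(sd⁻¹*(sr*cr)) := by
    rw [huuIn, h_t1p2, h_t1p1]
    ring
  have h_t2uu : ⟪t₂,uu⟫ = sd⁻¹*(cd*(sr*cr)) := by
    rw [huuIn, h_t2p2, h_t2p1]
    ring
  have hu₂In : ∀ x : E3, ⟪x,u₂⟫ = -sd*⟪x,p₁⟫ + cd*⟪x,uu⟫ := by
    intro x
    rw [hu₂def, inner_add_right, real_inner_smul_right, real_inner_smul_right]
  have h_p2u2 : ⟪p₂,u₂⟫ = (0:ℝ) := by rw [hu₂In, h_p2p1, h_p2uu]; ring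
  have h_p1u2 : ⟪p₁,u₂⟫ = -sd := by rw [hu₂In, h_p1p1, h_p1uu]; ring
  have h_u2p1 : ⟪u₂,p₁⟫ = -sd := by rw [real_inner_comm]; exact h_p1u2
  have h_uuu2 : ⟪uu,u₂⟫ = cd := by rw [hu₂In, h_uup1, h_uuuu]; ring
  have h_u2uu : ⟪u₂,uu⟫ = cd := by rw [real_inner_comm]; exact h_uuu2
  have h_u2u2 : ⟪u₂,u₂⟫ = (1:ℝ) := by
    rw [hu₂In u₂, h_u2p1, h_u2uu]
    linear_combination hsd2
  have h_t2u2 : ⟪t₂,u₂⟫ = sd⁻¹*(sr*cr) := by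
    rw [hu₂In, h_t2p1, h_t2uu]
    field_simp
    linear_combination hsd2
  -- linear independence facts
  have hind_pv : ∀ s t : ℝ, s • p + t • v = 0 → s = 0 ∧ t = 0 := by
    intro s t hst
    have h1 : ⟪p, s • p + t • v⟫ = (0:ℝ) := by rw [hst, inner_zero_right]
    have h2 : ⟪v, s • p + t • v⟫ = (0:ℝ) := by rw [hst, inner_zero_right]
    rw [inner_add_right, real_inner_smul_right, real_inner_smul_right, hpp, hpv] at h1
    rw [inner_add_right, real_inner_smul_right, real_inner_smul_right, hvp, hvv] at h2
    constructor <;> linarith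
  have hind_pw : ∀ s t : ℝ, s • p + t • w = 0 → s = 0 ∧ t = 0 := by
    intro s t hst
    have h1 : ⟪p, s • p + t • w⟫ = (0:ℝ) := by rw [hst, inner_zero_right]
    have h2 : ⟪w, s • p + t • w⟫ = (0:ℝ) := by rw [hst, inner_zero_right]
    rw [inner_add_right, real_inner_smul_right, real_inner_smul_right, hpp, hpw] at h1
    rw [inner_add_right, real_inner_smul_right, real_inner_smul_right, hwp, hww] at h2
    constructor <;> linarith
  have hind_p12 : ∀ s t : ℝ, s • p₁ + t • p₂ = 0 → s = 0 ∧ t = 0 := by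
    intro s t hst
    have h1 : ⟪p₁, s • p₁ + t • p₂⟫ = (0:ℝ) := by rw [hst, inner_zero_right]
    have h2 : ⟪p₂, s • p₁ + t • p₂⟫ = (0:ℝ) := by rw [hst, inner_zero_right]
    rw [inner_add_right, real_inner_smul_right, real_inner_smul_right, h_p1p1, h_p1p2] at h1
    rw [inner_add_right, real_inner_smul_right, real_inner_smul_right, h_p2p1, h_p2p2] at h2
    have h3 : t * (1 - cd^2) = 0 := by linear_combination h2 - cd*h1
    have h4 : (0:ℝ) < 1 - cd^2 := aux_one_sub_sq_pos hcdpos hcdlt1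
    have ht0 : t = 0 := by
      rcases mul_eq_zero.1 h3 with h | h
      · exact h
      · linarith
    constructor
    · rw [ht0] at h1; linarith
    · exact ht0
  -- V-membership of the arcs
  have hmemV₀ : ∀ t ∈ Icc (0:ℝ) r, (Real.cos t • p + Real.sin t • v) ∈ V := by
    intro t ht
    apply hmem _ (curve_inner_one hpp hvv hpv t)
    have he : ⟪p, Real.cos t • p + Real.sin t • v⟫ = Real.cos t := by
      simp only [inner_add_right, real_inner_smul_right, hpp, hpv]; ring
    rw [he, hcrdef]
    exact Real.cos_le_cos_of_nonneg_of_le_pi ht.1 (by linarith [Real.pi_pos, hrpi4]) ht.2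
  have hmemV₁ : ∀ t ∈ Icc (0:ℝ) r, (Real.cos t • p + Real.sin t • w) ∈ V := by
    intro t ht
    apply hmem _ (curve_inner_one hpp hww hpw t)
    have he : ⟪p, Real.cos t • p + Real.sin t • w⟫ = Real.cos t := by
      simp only [inner_add_right, real_inner_smul_right, hpp, hpw]; ring
    rw [he, hcrdef]
    exact Real.cos_le_cos_of_nonneg_of_le_pi ht.1 (by linarith [Real.pi_pos, hrpi4]) ht.2
  have hmemV₂ : ∀ t ∈ Icc (0:ℝ) d, (Real.cos t • p₁ + Real.sin t • uu) ∈ V := by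
    intro t ht
    apply hmem _ (curve_inner_one h_p1p1 h_uuuu h_p1uu t)
    have he : ⟪p, Real.cos t • p₁ + Real.sin t • uu⟫
        = Real.cos t * cr + Real.sin t * (sd⁻¹*(cr - cd*cr)) := by
      simp only [inner_add_right, real_inner_smul_right, h_pp1, h_puu]
    rw [he]
    have htd : t ≤ d := ht.2
    have ht0 : 0 ≤ t := ht.1
    have hpi := Real.pi_pos
    have hsin_t : 0 ≤ Real.sin t := Real.sin_nonneg_of_nonneg_of_le_pi ht0 (by linarith)
    have hsin_dt : 0 ≤ Real.sin (d - t) :=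
      Real.sin_nonneg_of_nonneg_of_le_pi (by linarith) (by linarith)
    have hsplit := Real.sin_add (d-t) t
    rw [sub_add_cancel] at hsplit
    have k1 : 0 ≤ Real.sin (d-t) * (1 - Real.cos t) :=
      mul_nonneg hsin_dt (by linarith [Real.cos_le_one t])
    have k2 : 0 ≤ Real.sin t * (1 - Real.cos (d-t)) :=
      mul_nonneg hsin_t (by linarith [Real.cos_le_one (d-t)])
    have e2 : Real.sin (d-t) + Real.sin t - Real.sin d
        = Real.sin (d-t) * (1 - Real.cos t) + Real.sin t * (1 - Real.cos (d-t)) := by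
      linear_combination -hsplit
    have hkey : sd ≤ Real.sin (d-t) + Real.sin t := by
      rw [← hsind]; linarith
    have hsdt : Real.sin (d-t) = sd * Real.cos t - cd * Real.sin t := by
      rw [Real.sin_sub, hsind, hcosd]
    have hc1 : cd + sr^2 = 1 := by rw [hcddef]; linear_combination hpyth
    have e3 : sd * Real.cos t + sr^2 * Real.sin t - sd
        = (Real.sin (d-t) + Real.sin t) - sd := by
      rw [hsdt]; linear_combination (Real.sin t) * hc1
    have h6 : 0 ≤ sd * Real.cos t + sr^2 * Real.sin t - sd := by linarith
    have hfac : cr - cd*cr = cr*sr^2 := by rw [hcddef]; linear_combination (-cr) * hpyth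
    have h7 : Real.cos t * cr + Real.sin t * (sd⁻¹*(cr - cd*cr)) - cr
        = (cr * sd⁻¹) * (sd * Real.cos t + sr^2 * Real.sin t - sd) := by
      rw [hfac]; field_simp
    have h8 : 0 ≤ (cr * sd⁻¹) * (sd * Real.cos t + sr^2 * Real.sin t - sd) :=
      mul_nonneg (mul_nonneg hcrpos.le (inv_nonneg.2 hsdpos.le)) h6
    linarith
  -- arc 0 : from p to p₁
  have hconn₀ : IsPreconnected ((fun t => Real.cos t • p + Real.sin t • v) '' (Icc 0 r)) :=
    isPreconnected_Icc.image _ (((Real.continuous_cos.smul continuous_const).add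
      (Real.continuous_sin.smul continuous_const)).continuousOn)
  have hsub₀ : ((fun t => Real.cos t • p + Real.sin t • v) '' (Icc 0 r)) ⊆
      V ∩ Metric.sphere 0 1 ∩ ↑(Submodule.span ℝ {p, v}) := by
    rintro x ⟨t, ht, rfl⟩
    exact ⟨⟨hmemV₀ t ht, mem_sphere_of_inner (curve_inner_one hpp hvv hpv t)⟩,
      Submodule.mem_span_pair.2 ⟨Real.cos t, Real.sin t, rfl⟩⟩
  obtain ⟨a₀, b₀, c₀, hab₀, hl₀⟩ := hgeo _ (rank_span_pair hind_pv) _ hsub₀ hconn₀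
  have hab₀' : ¬(a₀ = 0 ∧ b₀ = 0) := by
    rintro ⟨h1, h2⟩
    exact hab₀ (by rw [h1, h2])
  have hline₀ : ∀ t ∈ Icc (0:ℝ) r,
      a₀ * f (Real.cos t • p + Real.sin t • v) 0
        + b₀ * f (Real.cos t • p + Real.sin t • v) 1 = c₀ :=
    fun t ht => hl₀ _ ⟨t, ht, rfl⟩
  obtain ⟨hkill₀, hne₀⟩ := arc_main hV hf hconf hpp hvv hpv hrpos hmemV₀ hab₀' hline₀
  have hk00 : a₀ * (fderiv ℝ f p v) 0 + b₀ * (fderiv ℝ f p v) 1 = 0 := by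
    have h := hkill₀ 0 ⟨le_refl 0, hrpos.le⟩
    rwa [gamma_zero, gamma'_zero] at h
  have hk0r : a₀ * (fderiv ℝ f p₁ t₁) 0 + b₀ * (fderiv ℝ f p₁ t₁) 1 = 0 := by
    have h := hkill₀ r ⟨hrpos.le, le_refl r⟩
    rwa [← hcrdef, ← hsrdef, ← hp₁def, ← ht₁def] at h
  have hfp₁ : a₀ * f p₁ 0 + b₀ * f p₁ 1 = c₀ := by
    have h := hline₀ r ⟨hrpos.le, le_refl r⟩
    rwa [← hcrdef, ← hsrdef, ← hp₁def] at h
  have hfp : a₀ * f p 0 + b₀ * f p 1 = c₀ := by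
    have h := hline₀ 0 ⟨le_refl 0, hrpos.le⟩
    rwa [gamma_zero] at h
  have hkE₁ : a₀ * (f p₁ - f p) 0 + b₀ * (f p₁ - f p) 1 = 0 := by
    simp only [PiLp.sub_apply]
    linarith
  have hne₀' : f p₁ - f p ≠ 0 := by
    have h := hne₀
    rw [gamma_zero, ← hcrdef, ← hsrdef, ← hp₁def] at h
    exact sub_ne_zero.2 h
  -- arc 1 : from p to p₂
  have hconn₁ : IsPreconnected ((fun t => Real.cos t • p + Real.sin t • w) '' (Icc 0 r)) :=
    isPreconnected_Icc.image _ (((Real.continuous_cos.smul continuous_const).add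
      (Real.continuous_sin.smul continuous_const)).continuousOn)
  have hsub₁ : ((fun t => Real.cos t • p + Real.sin t • w) '' (Icc 0 r)) ⊆
      V ∩ Metric.sphere 0 1 ∩ ↑(Submodule.span ℝ {p, w}) := by
    rintro x ⟨t, ht, rfl⟩
    exact ⟨⟨hmemV₁ t ht, mem_sphere_of_inner (curve_inner_one hpp hww hpw t)⟩,
      Submodule.mem_span_pair.2 ⟨Real.cos t, Real.sin t, rfl⟩⟩
  obtain ⟨a₁, b₁, c₁, hab₁, hl₁⟩ := hgeo _ (rank_span_pair hind_pw) _ hsub₁ hconn₁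
  have hab₁' : ¬(a₁ = 0 ∧ b₁ = 0) := by
    rintro ⟨h1, h2⟩
    exact hab₁ (by rw [h1, h2])
  have hline₁ : ∀ t ∈ Icc (0:ℝ) r,
      a₁ * f (Real.cos t • p + Real.sin t • w) 0
        + b₁ * f (Real.cos t • p + Real.sin t • w) 1 = c₁ :=
    fun t ht => hl₁ _ ⟨t, ht, rfl⟩
  obtain ⟨hkill₁, hne₁⟩ := arc_main hV hf hconf hpp hww hpw hrpos hmemV₁ hab₁' hline₁
  have hk10 : a₁ * (fderiv ℝ f p w) 0 + b₁ * (fderiv ℝ f p w) 1 = 0 := by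
    have h := hkill₁ 0 ⟨le_refl 0, hrpos.le⟩
    rwa [gamma_zero, gamma'_zero] at h
  have hk1r : a₁ * (fderiv ℝ f p₂ t₂) 0 + b₁ * (fderiv ℝ f p₂ t₂) 1 = 0 := by
    have h := hkill₁ r ⟨hrpos.le, le_refl r⟩
    rwa [← hcrdef, ← hsrdef, ← hp₂def, ← ht₂def] at h
  have hfp₂ : a₁ * f p₂ 0 + b₁ * f p₂ 1 = c₁ := by
    have h := hline₁ r ⟨hrpos.le, le_refl r⟩
    rwa [← hcrdef, ← hsrdef, ← hp₂def] at h
  have hfp' : a₁ * f p 0 + b₁ * f p 1 = c₁ := by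
    have h := hline₁ 0 ⟨le_refl 0, hrpos.le⟩
    rwa [gamma_zero] at h
  have hkE₂ : a₁ * (f p₂ - f p) 0 + b₁ * (f p₂ - f p) 1 = 0 := by
    simp only [PiLp.sub_apply]
    linarith
  have hne₁' : f p₂ - f p ≠ 0 := by
    have h := hne₁
    rw [gamma_zero, ← hcrdef, ← hsrdef, ← hp₂def] at h
    exact sub_ne_zero.2 h
  -- arc 2 : from p₁ to p₂
  have hconn₂ : IsPreconnected ((fun t => Real.cos t • p₁ + Real.sin t • uu) '' (Icc 0 d)) :=
    isPreconnected_Icc.image _ (((Real.continuous_cos.smul continuous_const).add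
      (Real.continuous_sin.smul continuous_const)).continuousOn)
  have hsub₂ : ((fun t => Real.cos t • p₁ + Real.sin t • uu) '' (Icc 0 d)) ⊆
      V ∩ Metric.sphere 0 1 ∩ ↑(Submodule.span ℝ {p₁, p₂}) := by
    rintro x ⟨t, ht, rfl⟩
    refine ⟨⟨hmemV₂ t ht, mem_sphere_of_inner (curve_inner_one h_p1p1 h_uuuu h_p1uu t)⟩, ?_⟩
    refine Submodule.mem_span_pair.2
      ⟨Real.cos t - Real.sin t * (sd⁻¹ * cd), Real.sin t * sd⁻¹, ?_⟩
    rw [huudef]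
    module
  obtain ⟨a₂, b₂, c₂, hab₂, hl₂⟩ := hgeo _ (rank_span_pair hind_p12) _ hsub₂ hconn₂
  have hab₂' : ¬(a₂ = 0 ∧ b₂ = 0) := by
    rintro ⟨h1, h2⟩
    exact hab₂ (by rw [h1, h2])
  have hline₂ : ∀ t ∈ Icc (0:ℝ) d,
      a₂ * f (Real.cos t • p₁ + Real.sin t • uu) 0
        + b₂ * f (Real.cos t • p₁ + Real.sin t • uu) 1 = c₂ :=
    fun t ht => hl₂ _ ⟨t, ht, rfl⟩
  obtain ⟨hkill₂, hne₂⟩ := arc_main hV hf hconf h_p1p1 h_uuuu h_p1uu hdpos hmemV₂ hab₂' hline₂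
  have hk20 : a₂ * (fderiv ℝ f p₁ uu) 0 + b₂ * (fderiv ℝ f p₁ uu) 1 = 0 := by
    have h := hkill₂ 0 ⟨le_refl 0, hdpos.le⟩
    rwa [gamma_zero, gamma'_zero] at h
  have hδd : Real.cos d • p₁ + Real.sin d • uu = p₂ := by
    rw [hcosd, hsind, huudef, smul_smul, mul_inv_cancel₀ hsdne, one_smul]
    module
  have hδ'd : (-Real.sin d) • p₁ + Real.cos d • uu = u₂ := by
    rw [hcosd, hsind, hu₂def]
  have hk2d : a₂ * (fderiv ℝ f p₂ u₂) 0 + b₂ * (fderiv ℝ f p₂ u₂) 1 = 0 := by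
    have h := hkill₂ d ⟨hdpos.le, le_refl d⟩
    rwa [hδd, hδ'd] at h
  have hfp₁2 : a₂ * f p₁ 0 + b₂ * f p₁ 1 = c₂ := by
    have h := hline₂ 0 ⟨le_refl 0, hdpos.le⟩
    rwa [gamma_zero] at h
  have hfp₂2 : a₂ * f p₂ 0 + b₂ * f p₂ 1 = c₂ := by
    have h := hline₂ d ⟨hdpos.le, le_refl d⟩
    rwa [hδd] at h
  have hkY : a₂ * (f p₂ - f p₁) 0 + b₂ * (f p₂ - f p₁) 1 = 0 := by
    simp only [PiLp.sub_apply]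
    linarith
  -- conformality data at p, p₁, p₂
  obtain ⟨hlam0, hcf0⟩ := hconf p ⟨hpV, hpS⟩
  have hp₁V : p₁ ∈ V := hmem p₁ h_p1p1 (le_of_eq h_pp1.symm)
  have hp₂V : p₂ ∈ V := hmem p₂ h_p2p2 (le_of_eq h_pp2.symm)
  obtain ⟨hlam1, hcf1⟩ := hconf p₁ ⟨hp₁V, mem_sphere_of_inner h_p1p1⟩
  obtain ⟨hlam2, hcf2⟩ := hconf p₂ ⟨hp₂V, mem_sphere_of_inner h_p2p2⟩
  have cVV : ⟪fderiv ℝ f p v, fderiv ℝ f p v⟫ = lam p := by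
    rw [hcf0 v v hpv hpv, hvv, mul_one]
  have cWW : ⟪fderiv ℝ f p w, fderiv ℝ f p w⟫ = lam p := by
    rw [hcf0 w w hpw hpw, hww, mul_one]
  have cVW : ⟪fderiv ℝ f p v, fderiv ℝ f p w⟫ = 0 := by
    rw [hcf0 v w hpv hpw, hvw, mul_zero]
  have cQtQt : ⟪fderiv ℝ f p₁ t₁, fderiv ℝ f p₁ t₁⟫ = lam p₁ := by
    rw [hcf1 t₁ t₁ h_p1t1 h_p1t1, h_t1t1, mul_one]
  have cQuQu : ⟪fderiv ℝ f p₁ uu, fderiv ℝ f p₁ uu⟫ = lam p₁ := by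
    rw [hcf1 uu uu h_p1uu h_p1uu, h_uuuu, mul_one]
  have cQtQu : ⟪fderiv ℝ f p₁ t₁, fderiv ℝ f p₁ uu⟫ = lam p₁ * (-(sd⁻¹*(sr*cr))) := by
    rw [hcf1 t₁ uu h_p1t1 h_p1uu, h_t1uu]
  have cRtRt : ⟪fderiv ℝ f p₂ t₂, fderiv ℝ f p₂ t₂⟫ = lam p₂ := by
    rw [hcf2 t₂ t₂ h_p2t2 h_p2t2, h_t2t2, mul_one]
  have cRuRu : ⟪fderiv ℝ f p₂ u₂, fderiv ℝ f p₂ u₂⟫ = lam p₂ := by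
    rw [hcf2 u₂ u₂ h_p2u2 h_p2u2, h_u2u2, mul_one]
  have cRtRu : ⟪fderiv ℝ f p₂ t₂, fderiv ℝ f p₂ u₂⟫ = lam p₂ * (sd⁻¹*(sr*cr)) := by
    rw [hcf2 t₂ u₂ h_p2t2 h_p2u2, h_t2u2]
  -- nonvanishing of tangent images
  have hPvne : fderiv ℝ f p v ≠ 0 := by
    intro h; rw [h, inner_zero_left] at cVV; exact hlam0.ne cVV
  have hPwne : fderiv ℝ f p w ≠ 0 := by
    intro h; rw [h, inner_zero_left] at cWW; exact hlam0.ne cWW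
  have hQtne : fderiv ℝ f p₁ t₁ ≠ 0 := by
    intro h; rw [h, inner_zero_left] at cQtQt; exact hlam1.ne cQtQt
  have hQune : fderiv ℝ f p₁ uu ≠ 0 := by
    intro h; rw [h, inner_zero_left] at cQuQu; exact hlam1.ne cQuQu
  have hRtne : fderiv ℝ f p₂ t₂ ≠ 0 := by
    intro h; rw [h, inner_zero_left] at cRtRt; exact hlam2.ne cRtRt
  have hRune : fderiv ℝ f p₂ u₂ ≠ 0 := by
    intro h; rw [h, inner_zero_left] at cRuRu; exact hlam2.ne cRuRu
  -- kernel representations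
  obtain ⟨μ₁, hμ₁⟩ := ker2 hab₀' hk00 hkE₁ hPvne
  obtain ⟨ρ₁, hρ₁⟩ := ker2 hab₀' hk0r hkE₁ hQtne
  obtain ⟨μ₂, hμ₂⟩ := ker2 hab₁' hk10 hkE₂ hPwne
  obtain ⟨ρ₂, hρ₂⟩ := ker2 hab₁' hk1r hkE₂ hRtne
  obtain ⟨κ₁, hκ₁⟩ := ker2 hab₂' hk20 hkY hQune
  obtain ⟨κ₂, hκ₂⟩ := ker2 hab₂' hk2d hkY hRune
  -- the final algebra
  have hYE : f p₂ - f p₁ = (f p₂ - f p) - (f p₁ - f p) := by abel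
  have hS₁pos : 0 < ⟪f p₁ - f p, f p₁ - f p⟫ := inner_self_pos' hne₀'
  have hS₂pos : 0 < ⟪f p₂ - f p, f p₂ - f p⟫ := inner_self_pos' hne₁'
  have hE12 : ⟪f p₁ - f p, f p₂ - f p⟫ = 0 := by
    rw [hμ₁, hμ₂, real_inner_smul_left, real_inner_smul_right, cVW]
    ring
  have hE21 : ⟪f p₂ - f p, f p₁ - f p⟫ = 0 := by
    rw [real_inner_comm]; exact hE12
  have hE1Y : ⟪f p₁ - f p, f p₂ - f p₁⟫ = -⟪f p₁ - f p, f p₁ - f p⟫ := by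
    rw [hYE, inner_sub_right, hE12]; ring
  have hE2Y : ⟪f p₂ - f p, f p₂ - f p₁⟫ = ⟪f p₂ - f p, f p₂ - f p⟫ := by
    rw [hYE, inner_sub_right, hE21]; ring
  have hS₁ : ⟪f p₁ - f p, f p₁ - f p⟫ = ρ₁^2 * lam p₁ := by
    rw [hρ₁, real_inner_smul_left, real_inner_smul_right, cQtQt]; ring
  have hS₂ : ⟪f p₂ - f p, f p₂ - f p⟫ = ρ₂^2 * lam p₂ := by
    rw [hρ₂, real_inner_smul_left, real_inner_smul_right, cRtRt]; ring
  have hYY1 : ⟪f p₂ - f p₁, f p₂ - f p₁⟫ = κ₁^2 * lam p₁ := by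
    rw [hκ₁, real_inner_smul_left, real_inner_smul_right, cQuQu]; ring
  have hYY2 : ⟪f p₂ - f p₁, f p₂ - f p₁⟫ = κ₂^2 * lam p₂ := by
    rw [hκ₂, real_inner_smul_left, real_inner_smul_right, cRuRu]; ring
  have hYYsum : ⟪f p₂ - f p₁, f p₂ - f p₁⟫
      = ⟪f p₁ - f p, f p₁ - f p⟫ + ⟪f p₂ - f p, f p₂ - f p⟫ := by
    rw [hYE]
    exact inner_expand hE12 hE21
  have hA1 : ⟪f p₁ - f p, f p₂ - f p₁⟫ = ρ₁*κ₁*(lam p₁ * (-(sd⁻¹*(sr*cr)))) := by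
    rw [hρ₁, hκ₁, real_inner_smul_left, real_inner_smul_right, cQtQu]; ring
  have hA2 : ⟪f p₂ - f p, f p₂ - f p₁⟫ = ρ₂*κ₂*(lam p₂ * (sd⁻¹*(sr*cr))) := by
    rw [hρ₂, hκ₂, real_inner_smul_left, real_inner_smul_right, cRtRu]; ring
  -- S₁ = ρ₁ κ₁ lam₁ c  and  S₂ = ρ₂ κ₂ lam₂ c
  have hS1c : ⟪f p₁ - f p, f p₁ - f p⟫ = ρ₁*κ₁*lam p₁*(sd⁻¹*(sr*cr)) := by
    linear_combination hE1Y - hA1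
  have hS2c : ⟪f p₂ - f p, f p₂ - f p⟫ = ρ₂*κ₂*lam p₂*(sd⁻¹*(sr*cr)) := by
    linear_combination hA2 - hE2Y
  have hρ₁ne : ρ₁ ≠ 0 := by
    intro h; rw [h, zero_smul] at hρ₁; exact hne₀' hρ₁
  have hρ₂ne : ρ₂ ≠ 0 := by
    intro h; rw [h, zero_smul] at hρ₂; exact hne₁' hρ₂
  -- ρ = κ c
  have hprod1 : ρ₁ * (lam p₁ * (κ₁*(sd⁻¹*(sr*cr)) - ρ₁)) = 0 := by
    linear_combination hS₁ - hS1c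
  have hprod2 : ρ₂ * (lam p₂ * (κ₂*(sd⁻¹*(sr*cr)) - ρ₂)) = 0 := by
    linear_combination hS₂ - hS2c
  have hXY1 : ρ₁ = κ₁*(sd⁻¹*(sr*cr)) := by
    rcases mul_eq_zero.1 hprod1 with h | h
    · exact absurd h hρ₁ne
    · rcases mul_eq_zero.1 h with h' | h'
      · exact absurd h' hlam1.ne'
      · linarith
  have hXY2 : ρ₂ = κ₂*(sd⁻¹*(sr*cr)) := by
    rcases mul_eq_zero.1 hprod2 with h | h
    · exact absurd h hρ₂ne
    · rcases mul_eq_zero.1 h with h' | h'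
      · exact absurd h' hlam2.ne'
      · linarith
  -- S₁ = (S₁+S₂) c², S₂ = (S₁+S₂) c²
  have hfin1 : ⟪f p₁ - f p, f p₁ - f p⟫
      = (⟪f p₁ - f p, f p₁ - f p⟫ + ⟪f p₂ - f p, f p₂ - f p⟫) * (sd⁻¹*(sr*cr))^2 := by
    rw [← hYYsum, hYY1, hS₁, hXY1]; ring
  have hfin2 : ⟪f p₂ - f p, f p₂ - f p⟫
      = (⟪f p₁ - f p, f p₁ - f p⟫ + ⟪f p₂ - f p, f p₂ - f p⟫) * (sd⁻¹*(sr*cr))^2 := by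
    rw [← hYYsum, hYY2, hS₂, hXY2]; ring
  have hsumne : ⟪f p₁ - f p, f p₁ - f p⟫ + ⟪f p₂ - f p, f p₂ - f p⟫ ≠ 0 :=
    ne_of_gt (add_pos hS₁pos hS₂pos)
  have hhalf : (⟪f p₁ - f p, f p₁ - f p⟫ + ⟪f p₂ - f p, f p₂ - f p⟫) * 1
      = (⟪f p₁ - f p, f p₁ - f p⟫ + ⟪f p₂ - f p, f p₂ - f p⟫) * (2*(sd⁻¹*(sr*cr))^2) := by
    linear_combination hfin1 + hfin2
  have hone : (1:ℝ) = 2*(sd⁻¹*(sr*cr))^2 := mul_left_cancel₀ hsumne hhalf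
  exact final_contra hpyth hcddef hsd2 hcrpos hcrlt1 hsrpos hsdne hone
end
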